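/- arXiv:1805.03009 — 8 statements merged into one kernel-verified Lean document; each statement's English description precedes it below -/
import Mathlib

section
/- Let α > (1/4) Σ_{ν=1}^N ‖χ_Z(S_ν − χ_ν S_ν)‖²_{L²(Ω)→L²(Ω)} (the offset). Then the map F : U → U with components F^ν(u) = S_ν*(χ_ν(Su − y_d^ν)) + α u^ν is strongly monotone; more precisely, for all u, v ∈ U one has (F(u) − F(v), u − v)_U ≥ (α − (1/4) Σ_{ν=1}^N ‖χ_Z(S_ν − χ_ν S_ν)‖²_{L²(Ω)→L²(Ω)}) ‖u − v‖²_U. -/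
open MeasureTheory
open scoped RealInnerProductSpace ENNReal

noncomputable section

/-- `L²(Ω)` for a subset `Ω ⊆ ℝⁿ`. -/
abbrev L2Sp {n : ℕ} (Ω : Set (EuclideanSpace ℝ (Fin n))) :=
  Lp ℝ 2 (volume.restrict Ω)

/-- `U = L²(Ω)^N` with the Hilbert product structure. -/
abbrev USp {n : ℕ} (N : ℕ) (Ω : Set (EuclideanSpace ℝ (Fin n))) :=
  PiLp 2 fun _ : Fin N => L2Sp Ω

/-- An operator acting a.e. as multiplication by an indicator is self-adjoint. -/
lemma indicator_op_selfadj {X : Type*} [MeasurableSpace X] (μ : Measure X) (s : Set X)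
    (P : Lp ℝ 2 μ →L[ℝ] Lp ℝ 2 μ) (hP : ∀ f : Lp ℝ 2 μ, ⇑(P f) =ᵐ[μ] s.indicator ⇑f)
    (f g : Lp ℝ 2 μ) : ⟪P f, g⟫ = ⟪f, P g⟫ := by
  rw [MeasureTheory.L2.inner_def, MeasureTheory.L2.inner_def]
  refine integral_congr_ae ?_
  filter_upwards [hP f, hP g] with x h1 h2
  rw [h1, h2]
  simp only [RCLike.inner_apply, starRingEnd_apply, star_trivial]
  by_cases hx : x ∈ s
  · rw [Set.indicator_of_mem hx, Set.indicator_of_mem hx]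
  · rw [Set.indicator_of_notMem hx, Set.indicator_of_notMem hx, zero_mul, mul_zero]

/-- Composition of two indicator multiplication operators with nested sets. -/
lemma indicator_op_comp {X : Type*} [MeasurableSpace X] (μ : Measure X) (s t : Set X)
    (hst : s ⊆ t)
    (P Q : Lp ℝ 2 μ →L[ℝ] Lp ℝ 2 μ)
    (hP : ∀ f : Lp ℝ 2 μ, ⇑(P f) =ᵐ[μ] s.indicator ⇑f)
    (hQ : ∀ f : Lp ℝ 2 μ, ⇑(Q f) =ᵐ[μ] t.indicator ⇑f)
    (f : Lp ℝ 2 μ) : P (Q f) = P f := by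
  refine Lp.ext ?_
  filter_upwards [hP (Q f), hQ f, hP f] with x h1 h2 h3
  rw [h1, h3]
  by_cases hx : x ∈ s
  · rw [Set.indicator_of_mem hx, Set.indicator_of_mem hx, h2, Set.indicator_of_mem (hst hx)]
  · rw [Set.indicator_of_notMem hx, Set.indicator_of_notMem hx]

/-- Abstract Hilbert-space version of the strong monotonicity estimate. -/
lemma key_strong_mono {E : Type*} [NormedAddCommGroup E] [InnerProductSpace ℝ E]
    [CompleteSpace E] {N : ℕ}
    (S χ : Fin N → (E →L[ℝ] E)) (χZ : E →L[ℝ] E)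
    (hχsa : ∀ ν (f g : E), ⟪χ ν f, g⟫ = ⟪f, χ ν g⟫)
    (hχZsa : ∀ f g : E, ⟪χZ f, g⟫ = ⟪f, χZ g⟫)
    (hχχZ : ∀ ν (f : E), χ ν (χZ f) = χ ν f)
    (hχZχZ : ∀ f : E, χZ (χZ f) = χZ f)
    (yd : Fin N → E) (α : ℝ)
    (F : PiLp 2 (fun _ : Fin N => E) → PiLp 2 (fun _ : Fin N => E))
    (hF : ∀ (u : PiLp 2 (fun _ : Fin N => E)) (ν : Fin N),
      F u ν = ContinuousLinearMap.adjoint (S ν) (χ ν ((∑ j, S j (u j)) - yd ν)) + α • u ν)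
    (u v : PiLp 2 (fun _ : Fin N => E)) :
    ⟪F u - F v, u - v⟫ ≥
      (α - (1 / 4) * ∑ ν, ‖χZ ∘L (S ν - χ ν ∘L S ν)‖ ^ 2) * ‖u - v‖ ^ 2 := by
  set w : PiLp 2 (fun _ : Fin N => E) := u - v with hw
  set a : E := ∑ j, S j (w j) with ha
  set b : E := χZ a with hb
  let T : Fin N → (E →L[ℝ] E) := fun ν => χZ ∘L (S ν - χ ν ∘L S ν)
  set r : E := ∑ ν, (S ν (w ν) - χ ν (S ν (w ν))) with hr
  -- component difference of F
  have hFw : ∀ ν, F u ν - F v ν =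
      ContinuousLinearMap.adjoint (S ν) (χ ν a) + α • w ν := by
    intro ν
    have h1 : ((∑ j, S j (u j)) - yd ν) - ((∑ j, S j (v j)) - yd ν) = a := by
      rw [ha, sub_sub_sub_cancel_right, ← Finset.sum_sub_distrib]
      refine Finset.sum_congr rfl fun j _ => ?_
      have : w j = u j - v j := rfl
      rw [this, map_sub]
    have h2 : w ν = u ν - v ν := rfl
    rw [hF u ν, hF v ν, h2, ← h1]
    simp only [map_sub, smul_sub]
    abel
  -- expand the inner product
  have hinner : ⟪F u - F v, w⟫ =
      (∑ ν, ⟪χ ν a, S ν (w ν)⟫) + α * ‖w‖ ^ 2 := by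
    rw [PiLp.inner_apply]
    have hν : ∀ ν : Fin N, ⟪(F u - F v) ν, w ν⟫ =
        ⟪χ ν a, S ν (w ν)⟫ + α * ⟪w ν, w ν⟫ := by
      intro ν
      have h0 : (F u - F v) ν = F u ν - F v ν := rfl
      rw [h0, hFw ν, inner_add_left, ContinuousLinearMap.adjoint_inner_left,
        real_inner_smul_left]
    rw [Finset.sum_congr rfl fun ν _ => hν ν, Finset.sum_add_distrib, ← Finset.mul_sum]
    congr 1
    rw [← PiLp.inner_apply, real_inner_self_eq_norm_sq]
  -- the key quantity
  have hQ : (∑ ν, ⟪χ ν a, S ν (w ν)⟫) = ‖b‖ ^ 2 - ⟪b, χZ r⟫ := by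
    have h1 : ∀ ν : Fin N, ⟪χ ν a, S ν (w ν)⟫ = ⟪b, χ ν (S ν (w ν))⟫ := by
      intro ν
      rw [hb, ← hχχZ ν a, hχsa]
    rw [Finset.sum_congr rfl fun ν _ => h1 ν, ← inner_sum]
    have h2 : (∑ ν, χ ν (S ν (w ν))) = a - r := by
      rw [hr, ha, ← Finset.sum_sub_distrib]
      refine Finset.sum_congr rfl fun ν _ => ?_
      abel
    rw [h2, inner_sub_right]
    congr 1
    · rw [hb]
      calc ⟪χZ a, a⟫ = ⟪χZ (χZ a), a⟫ := by rw [hχZχZ]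
        _ = ⟪χZ a, χZ a⟫ := hχZsa (χZ a) a
        _ = ‖χZ a‖ ^ 2 := real_inner_self_eq_norm_sq _
    · rw [hb]
      calc ⟪χZ a, r⟫ = ⟪a, χZ r⟫ := hχZsa a r
        _ = ⟪a, χZ (χZ r)⟫ := by rw [hχZχZ]
        _ = ⟪χZ a, χZ r⟫ := (hχZsa a (χZ r)).symm
  -- bound on ‖χZ r‖
  have hrT : χZ r = ∑ ν, T ν (w ν) := by
    rw [hr, map_sum]
    refine Finset.sum_congr rfl fun ν _ => ?_
    simp [T]
  have hnorm : ‖χZ r‖ ≤ ∑ ν, ‖T ν‖ * ‖w ν‖ := by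
    rw [hrT]
    refine le_trans (norm_sum_le _ _) (Finset.sum_le_sum fun ν _ => ?_)
    exact ContinuousLinearMap.le_opNorm _ _
  have hCS : (∑ ν, ‖T ν‖ * ‖w ν‖) ^ 2 ≤ (∑ ν, ‖T ν‖ ^ 2) * (∑ ν, ‖w ν‖ ^ 2) :=
    Finset.sum_mul_sq_le_sq_mul_sq _ _ _
  have hw2 : (∑ ν, ‖w ν‖ ^ 2) = ‖w‖ ^ 2 := by
    rw [PiLp.norm_sq_eq_of_L2]
  have hbr : ⟪b, χZ r⟫ ≤ ‖b‖ * ‖χZ r‖ := real_inner_le_norm _ _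
  have hZr2 : ‖χZ r‖ ^ 2 ≤ (∑ ν, ‖T ν‖ ^ 2) * ‖w‖ ^ 2 := by
    have h0 : (0:ℝ) ≤ ∑ ν, ‖T ν‖ * ‖w ν‖ :=
      Finset.sum_nonneg fun ν _ => mul_nonneg (norm_nonneg _) (norm_nonneg _)
    calc ‖χZ r‖ ^ 2 ≤ (∑ ν, ‖T ν‖ * ‖w ν‖) ^ 2 := pow_le_pow_left₀ (norm_nonneg _) hnorm 2
      _ ≤ (∑ ν, ‖T ν‖ ^ 2) * (∑ ν, ‖w ν‖ ^ 2) := hCS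
      _ = (∑ ν, ‖T ν‖ ^ 2) * ‖w‖ ^ 2 := by rw [hw2]
  rw [hinner, hQ]
  have hfinal : ‖b‖ ^ 2 - ⟪b, χZ r⟫ ≥ -(1/4) * ((∑ ν, ‖T ν‖ ^ 2) * ‖w‖ ^ 2) := by
    nlinarith [sq_nonneg (‖b‖ - ‖χZ r‖ / 2), norm_nonneg b, norm_nonneg (χZ r)]
  have hre : (α - 1 / 4 * ∑ ν, ‖χZ ∘L (S ν - χ ν ∘L S ν)‖ ^ 2) * ‖w‖ ^ 2 =
      α * ‖w‖ ^ 2 + (-(1/4) * ((∑ ν, ‖T ν‖ ^ 2) * ‖w‖ ^ 2)) := by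
    show _ = _ + (-(1/4) * ((∑ ν, ‖χZ ∘L (S ν - χ ν ∘L S ν)‖ ^ 2) * ‖w‖ ^ 2))
    ring
  rw [hre]
  linarith [hfinal]

set_option maxHeartbeats 1000000 in
/-- If `α` exceeds the offset
`(1/4) Σ_ν ‖χ_Z(S_ν − χ_ν S_ν)‖²`, then the map `F` with components
`F^ν(u) = S_ν*(χ_ν(Su − y_d^ν)) + α u^ν` is strongly monotone with constant
`α − offset`. -/
theorem stmt0 {n N : ℕ} (Ω : Set (EuclideanSpace ℝ (Fin n)))
    (Ων : Fin N → Set (EuclideanSpace ℝ (Fin n))) (hΩν : ∀ ν, Ων ν ⊆ Ω)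
    (S : Fin N → (L2Sp Ω →L[ℝ] L2Sp Ω))
    -- `χ ν` is multiplication by the characteristic function of `Ω_ν` on `L²(Ω)`
    (χ : Fin N → (L2Sp Ω →L[ℝ] L2Sp Ω))
    (hχ : ∀ ν (f : L2Sp Ω), ⇑(χ ν f) =ᵐ[volume.restrict Ω] (Ων ν).indicator ⇑f)
    -- `χZ` is multiplication by the characteristic function of `Z = ⋃ ν, Ω_ν`
    (χZ : L2Sp Ω →L[ℝ] L2Sp Ω)
    (hχZ : ∀ f : L2Sp Ω, ⇑(χZ f) =ᵐ[volume.restrict Ω] (⋃ ν, Ων ν).indicator ⇑f)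
    (yd : Fin N → L2Sp Ω) (α : ℝ)
    (hα : α > (1 / 4) * ∑ ν, ‖χZ ∘L (S ν - χ ν ∘L S ν)‖ ^ 2)
    (F : USp N Ω → USp N Ω)
    (hF : ∀ (u : USp N Ω) (ν : Fin N),
      F u ν = ContinuousLinearMap.adjoint (S ν) (χ ν ((∑ j, S j (u j)) - yd ν)) + α • u ν) :
    ∀ u v : USp N Ω,
      ⟪F u - F v, u - v⟫ ≥
        (α - (1 / 4) * ∑ ν, ‖χZ ∘L (S ν - χ ν ∘L S ν)‖ ^ 2) * ‖u - v‖ ^ 2 := by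
  intro u v
  have hsub : ∀ ν, Ων ν ⊆ ⋃ j, Ων j := fun ν => Set.subset_iUnion Ων ν
  exact key_strong_mono S χ χZ
    (fun ν => indicator_op_selfadj _ _ (χ ν) (hχ ν))
    (indicator_op_selfadj _ _ χZ hχZ)
    (fun ν => indicator_op_comp _ _ _ (hsub ν) (χ ν) χZ (hχ ν) hχZ)
    (fun f => indicator_op_comp _ _ _ (le_refl _) χZ χZ hχZ hχZ f)
    yd α F hF u v
end
end

section
/- If Ω_ν = Ω_0 ⊆ Ω for all ν = 1,…,N, then for every α > 0 the non-reducible Nash equilibrium problem has a unique solution, i.e., there exists a unique ū ∈ U_ad such that for every ν the component ū^ν minimizes v ↦ (1/2)‖S(v, ū^{−ν}) − y_d^ν‖²_{L²(Ω_0)} + (α/2)‖v‖²_{L²(Ω)} over U_ad^ν. -/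
open MeasureTheory
open scoped RealInnerProductSpace ENNReal

noncomputable section

set_option maxHeartbeats 2000000
set_option synthInstance.maxHeartbeats 1000000

/-! ### Auxiliary abstract Hilbert space lemmas -/

section Abstract

variable {F : Type*} [NormedAddCommGroup F] [InnerProductSpace ℝ F] [CompleteSpace F]

lemma exists_proj_pt {K : Set F} (hne : K.Nonempty) (hc : IsClosed K) (hconv : Convex ℝ K)
    (x : F) : ∃ p ∈ K, ∀ w ∈ K, ⟪x - p, w - p⟫ ≤ 0 := by
  obtain ⟨p, hp, hnorm⟩ :=
    exists_norm_eq_iInf_of_complete_convex hne hc.isComplete hconv x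
  exact ⟨p, hp, (norm_eq_iInf_iff_real_inner_le_zero hconv hp).mp hnorm⟩

/-- Existence and uniqueness of the solution of the variational inequality associated with
an affine strongly monotone operator on a nonempty closed convex subset of a Hilbert space. -/
lemma vi_unique {K : Set F} (hne : K.Nonempty) (hc : IsClosed K) (hconv : Convex ℝ K)
    (B : F →L[ℝ] F) (b : F) (α : ℝ) (hα : 0 < α)
    (hmono : ∀ z : F, α * ‖z‖ ^ 2 ≤ ⟪B z, z⟫) :
    ∃! u : F, u ∈ K ∧ ∀ v ∈ K, 0 ≤ ⟪B u + b, v - u⟫ := by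
  -- uniqueness part, used twice
  have huniq : ∀ u w : F, (u ∈ K ∧ ∀ v ∈ K, 0 ≤ ⟪B u + b, v - u⟫) →
      (w ∈ K ∧ ∀ v ∈ K, 0 ≤ ⟪B w + b, v - w⟫) → u = w := by
    intro u w hu hw
    have h1 := hu.2 w hw.1
    have h2 := hw.2 u hu.1
    have e : ⟪B u + b, w - u⟫ + ⟪B w + b, u - w⟫ = -⟪B (u - w), u - w⟫ := by
      simp only [map_sub, inner_sub_left, inner_sub_right, inner_add_left]
      ring
    have hm := hmono (u - w)
    have : ‖u - w‖ ^ 2 ≤ 0 := by nlinarith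
    have : ‖u - w‖ = 0 := by nlinarith [norm_nonneg (u - w)]
    rwa [norm_sub_eq_zero_iff] at this
  -- the projection map
  have hproj := fun x => exists_proj_pt hne hc hconv x
  choose P hPmem hPchar using hproj
  have hPnonexp : ∀ x y : F, ‖P x - P y‖ ≤ ‖x - y‖ := by
    intro x y
    have h1 := hPchar x (P y) (hPmem y)
    have h2 := hPchar y (P x) (hPmem x)
    have e : ⟪x - y, P x - P y⟫ - ‖P x - P y‖ ^ 2
        = -⟪x - P x, P y - P x⟫ + -⟪y - P y, P x - P y⟫ := by
      simp only [← real_inner_self_eq_norm_sq, inner_sub_left, inner_sub_right]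
      ring
    have hle : ‖P x - P y‖ ^ 2 ≤ ⟪x - y, P x - P y⟫ := by linarith
    have hcs := real_inner_le_norm (x - y) (P x - P y)
    rcases eq_or_lt_of_le (norm_nonneg (P x - P y)) with h0 | h0
    · rw [← h0]; exact norm_nonneg _
    · nlinarith
  -- contraction constants
  set M : ℝ := ‖B‖ ^ 2 + α ^ 2 with hM
  have hMpos : 0 < M := by positivity
  have hαM : α ^ 2 ≤ M := by nlinarith [sq_nonneg ‖B‖]
  set ρ : ℝ := α / M with hρdef
  have hρ : 0 < ρ := by positivity
  set q : ℝ := Real.sqrt (1 - α ^ 2 / M) with hq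
  have hq0 : 0 ≤ q := Real.sqrt_nonneg _
  have hqsq : q ^ 2 = 1 - α ^ 2 / M := by
    rw [hq, Real.sq_sqrt]
    have : α ^ 2 / M ≤ 1 := by
      rw [div_le_one hMpos]; exact hαM
    linarith
  have hq1 : q < 1 := by
    have : α ^ 2 / M > 0 := by positivity
    nlinarith
  have hcontr : ∀ z : F, ‖z - ρ • B z‖ ≤ q * ‖z‖ := by
    intro z
    have hBz := B.le_opNorm z
    have hmz := hmono z
    have hexp : ‖z - ρ • B z‖ ^ 2
        = ‖z‖ ^ 2 - 2 * (ρ * ⟪B z, z⟫) + ρ ^ 2 * ‖B z‖ ^ 2 := by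
      rw [norm_sub_sq_real, real_inner_smul_right, norm_smul, real_inner_comm]
      simp [abs_of_pos hρ, mul_pow]
    have hsq : ‖z - ρ • B z‖ ^ 2 ≤ (q * ‖z‖) ^ 2 := by
      have h1 : ρ ^ 2 * ‖B z‖ ^ 2 ≤ ρ ^ 2 * (‖B‖ ^ 2 * ‖z‖ ^ 2) := by
        have : ‖B z‖ ^ 2 ≤ (‖B‖ * ‖z‖) ^ 2 := by
          have := norm_nonneg (B z)
          nlinarith [B.le_opNorm z]
        nlinarith [sq_nonneg ρ]
      have h2 : ρ * (α * ‖z‖ ^ 2) ≤ ρ * ⟪B z, z⟫ := by nlinarith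
      have hBM : ‖B‖ ^ 2 ≤ M := by nlinarith [sq_nonneg α]
      have key : ρ ^ 2 * (‖B‖ ^ 2 * ‖z‖ ^ 2) - 2 * (ρ * (α * ‖z‖ ^ 2))
          ≤ -(α ^ 2 / M) * ‖z‖ ^ 2 := by
        rw [hρdef]
        have hM0 : M ≠ 0 := ne_of_gt hMpos
        have : (α / M) ^ 2 * (‖B‖ ^ 2 * ‖z‖ ^ 2) ≤ (α ^ 2 / M) * ‖z‖ ^ 2 := by
          rw [div_pow]
          rw [div_mul_eq_mul_div, div_mul_eq_mul_div, div_le_div_iff₀ (by positivity) hMpos]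
          have hfac : 0 ≤ α ^ 2 * ‖z‖ ^ 2 * M * (M - ‖B‖ ^ 2) :=
            mul_nonneg (mul_nonneg (mul_nonneg (sq_nonneg α) (sq_nonneg ‖z‖)) hMpos.le)
              (sub_nonneg.2 hBM)
          have : α ^ 2 * (‖B‖ ^ 2 * ‖z‖ ^ 2) * M ≤ α ^ 2 * (M * ‖z‖ ^ 2) * M := by
            nlinarith [hfac]
          calc α ^ 2 * (‖B‖ ^ 2 * ‖z‖ ^ 2) * M ≤ α ^ 2 * (M * ‖z‖ ^ 2) * M := this
            _ = α ^ 2 * ‖z‖ ^ 2 * M ^ 2 := by ring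
        have h2' : 2 * (α / M * (α * ‖z‖ ^ 2)) = 2 * (α ^ 2 / M) * ‖z‖ ^ 2 := by
          field_simp
        linarith
      rw [hexp, mul_pow, hqsq]
      nlinarith
    have := hq0
    exact le_of_pow_le_pow_left₀ two_ne_zero (by positivity) hsq
  -- the contraction on the subtype
  set T : F → F := fun u => u - ρ • (B u + b) with hT
  have hTdiff : ∀ u v : F, T u - T v = (u - v) - ρ • B (u - v) := by
    intro u v
    simp only [hT, map_sub, smul_sub, smul_add]
    abel
  haveI : Nonempty ↥K := hne.to_subtype
  haveI : CompleteSpace ↥K := hc.completeSpace_coe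
  set Φ : ↥K → ↥K := fun u => ⟨P (T u), hPmem _⟩ with hΦ
  have hΦcontr : ContractingWith ⟨q, hq0⟩ Φ := by
    constructor
    · exact_mod_cast hq1
    · apply LipschitzWith.of_dist_le_mul
      intro u v
      rw [Subtype.dist_eq, Subtype.dist_eq, dist_eq_norm, dist_eq_norm]
      show ‖P (T ↑u) - P (T ↑v)‖ ≤ q * ‖(u : F) - ↑v‖
      calc ‖P (T ↑u) - P (T ↑v)‖ ≤ ‖T ↑u - T ↑v‖ := hPnonexp _ _
        _ = ‖((u : F) - ↑v) - ρ • B ((u : F) - ↑v)‖ := by rw [hTdiff]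
        _ ≤ q * ‖(u : F) - ↑v‖ := hcontr _
  set u₀ : ↥K := ContractingWith.fixedPoint Φ hΦcontr with hu₀
  have hfix : Φ u₀ = u₀ := hΦcontr.fixedPoint_isFixedPt
  have hfix' : P (T ↑u₀) = ↑u₀ := congrArg Subtype.val hfix
  refine ⟨↑u₀, ⟨u₀.2, ?_⟩, fun y hy => huniq y u₀ hy ⟨u₀.2, ?_⟩⟩ <;>
  · intro v hv
    have hch := hPchar (T ↑u₀) v hv
    rw [hfix'] at hch
    have : T ↑u₀ - ↑u₀ = -(ρ • (B ↑u₀ + b)) := by simp [hT]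
    rw [this, inner_neg_left, real_inner_smul_left] at hch
    have : 0 ≤ ρ * ⟪B ↑u₀ + b, v - ↑u₀⟫ := by linarith
    nlinarith

/-- A point of a convex set minimizes the quadratic cost
`v ↦ ½‖A v + d‖² + (α/2)‖v‖²` over the set iff it satisfies the associated
first-order variational inequality. -/
lemma quad_min_iff {E : Type*} [NormedAddCommGroup E] [InnerProductSpace ℝ E] [CompleteSpace E]
    {K : Set E} (hconv : Convex ℝ K) (A : E →L[ℝ] E) (d : E) (α : ℝ) (hα : 0 < α)
    {u : E} (hu : u ∈ K) :
    (∀ v ∈ K, (1/2) * ‖A u + d‖ ^ 2 + (α/2) * ‖u‖ ^ 2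
        ≤ (1/2) * ‖A v + d‖ ^ 2 + (α/2) * ‖v‖ ^ 2)
    ↔ ∀ v ∈ K, 0 ≤ ⟪ContinuousLinearMap.adjoint A (A u + d) + α • u, v - u⟫ := by
  have key : ∀ v : E,
      (1/2) * ‖A v + d‖ ^ 2 + (α/2) * ‖v‖ ^ 2
        - ((1/2) * ‖A u + d‖ ^ 2 + (α/2) * ‖u‖ ^ 2)
      = ⟪ContinuousLinearMap.adjoint A (A u + d) + α • u, v - u⟫
        + (1/2) * ‖A (v - u)‖ ^ 2 + (α/2) * ‖v - u‖ ^ 2 := by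
    intro v
    have h1 : A v + d = (A u + d) + A (v - u) := by rw [map_sub]; abel
    have huv : u + (v - u) = v := by abel
    have h3 : ‖v‖ ^ 2 = ‖u‖ ^ 2 + 2 * ⟪u, v - u⟫ + ‖v - u‖ ^ 2 := by
      conv_lhs => rw [← huv]
      rw [norm_add_sq_real]
    have h4 : ‖A v + d‖ ^ 2
        = ‖A u + d‖ ^ 2 + 2 * ⟪A u + d, A (v - u)⟫ + ‖A (v - u)‖ ^ 2 := by
      rw [h1, norm_add_sq_real]
    have h5 : ⟪ContinuousLinearMap.adjoint A (A u + d) + α • u, v - u⟫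
        = ⟪A u + d, A (v - u)⟫ + α * ⟪u, v - u⟫ := by
      rw [inner_add_left, real_inner_smul_left, ContinuousLinearMap.adjoint_inner_left]
    rw [h4, h3, h5]; ring
  constructor
  · intro hmin v hv
    by_contra hneg
    push_neg at hneg
    set G : ℝ := ⟪ContinuousLinearMap.adjoint A (A u + d) + α • u, v - u⟫ with hG
    set Q : ℝ := (1/2) * ‖A (v - u)‖ ^ 2 + (α/2) * ‖v - u‖ ^ 2 with hQ
    have hQ0 : 0 ≤ Q := by positivity
    set t : ℝ := min 1 (-G / (2 * Q + 1)) with ht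
    have ht0 : 0 < t := lt_min one_pos (div_pos (neg_pos.2 hneg) (by positivity))
    have ht1 : t ≤ 1 := min_le_left _ _
    have hw : u + t • (v - u) ∈ K := hconv.add_smul_sub_mem hu hv ⟨ht0.le, ht1⟩
    have hm := hmin _ hw
    have hk := key (u + t • (v - u))
    have hsm : (u + t • (v - u)) - u = t • (v - u) := by abel
    have hinner : ⟪ContinuousLinearMap.adjoint A (A u + d) + α • u,
        (u + t • (v - u)) - u⟫ = t * G := by
      rw [hsm, real_inner_smul_right]
    have hnA : ‖A ((u + t • (v - u)) - u)‖ ^ 2 = t ^ 2 * ‖A (v - u)‖ ^ 2 := by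
      rw [hsm, A.map_smul, norm_smul, Real.norm_eq_abs, abs_of_pos ht0, mul_pow]
    have hnn : ‖(u + t • (v - u)) - u‖ ^ 2 = t ^ 2 * ‖v - u‖ ^ 2 := by
      rw [hsm, norm_smul, Real.norm_eq_abs, abs_of_pos ht0, mul_pow]
    have h0t : 0 ≤ t * G + t ^ 2 * Q := by
      rw [hinner, hnA, hnn] at hk
      rw [hQ]
      nlinarith [hk, hm]
    have h6 : t * (2 * Q + 1) ≤ -G := by
      have := min_le_right 1 (-G / (2 * Q + 1))
      rw [ht]
      calc min 1 (-G / (2 * Q + 1)) * (2 * Q + 1) ≤ (-G / (2 * Q + 1)) * (2 * Q + 1) := by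
            apply mul_le_mul_of_nonneg_right this (by positivity)
        _ = -G := by field_simp
    nlinarith [mul_le_mul_of_nonneg_left h6 ht0.le, mul_pos ht0 ht0, h0t]
  · intro hVI v hv
    have hk := key v
    have h := hVI v hv
    nlinarith [sq_nonneg ‖A (v - u)‖, sq_nonneg ‖v - u‖, hk, h]

end Abstract

/-! ### Order and completeness facts for the concrete spaces -/

section LpOrderedSMul
variable {X : Type*} [MeasurableSpace X] {μ : Measure X} {p : ℝ≥0∞}

lemma lp_smul_le {f g : Lp ℝ p μ} {c : ℝ} (hc : 0 ≤ c) (h : f ≤ g) : c • f ≤ c • g := by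
  rw [← Lp.coeFn_le] at h ⊢
  filter_upwards [h, Lp.coeFn_smul c f, Lp.coeFn_smul c g] with x hx h1 h2
  simp only [h1, h2, Pi.smul_apply, smul_eq_mul]
  exact mul_le_mul_of_nonneg_left hx hc

instance : PosSMulMono ℝ (Lp ℝ p μ) :=
  ⟨fun _ hc _ _ h => lp_smul_le hc h⟩

end LpOrderedSMul

instance piLpComplete {ι : Type*} [Fintype ι] (E : ι → Type*) [∀ i, NormedAddCommGroup (E i)]
    [∀ i, CompleteSpace (E i)] : CompleteSpace (PiLp 2 E) :=
  inferInstance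

/-- If all observation domains coincide, `Ω_ν = Ω_0 ⊆ Ω`, then for every
`α > 0` the non-reducible Nash equilibrium problem has a unique solution. -/
theorem stmt2 {n N : ℕ} (Ω : Set (EuclideanSpace ℝ (Fin n)))
    (Ω0 : Set (EuclideanSpace ℝ (Fin n))) (hΩ0 : Ω0 ⊆ Ω)
    (S : Fin N → (L2Sp Ω →L[ℝ] L2Sp Ω))
    -- `χ0` is multiplication by the characteristic function of `Ω_0` on `L²(Ω)`,
    -- so that `‖χ0 g‖ = ‖g‖_{L²(Ω_0)}`
    (χ0 : L2Sp Ω →L[ℝ] L2Sp Ω)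
    (hχ0 : ∀ f : L2Sp Ω, ⇑(χ0 f) =ᵐ[volume.restrict Ω] Ω0.indicator ⇑f)
    (yd : Fin N → L2Sp Ω)
    -- the admissible sets are given by bilateral pointwise bounds
    (ua ub : Fin N → L2Sp Ω)
    (hab : ∀ ν, ∀ᵐ x ∂(volume.restrict Ω), ua ν x ≤ ub ν x)
    (α : ℝ) (hα : 0 < α) :
    ∃! ubar : USp N Ω,
      (∀ ν, ∀ᵐ x ∂(volume.restrict Ω), ua ν x ≤ ubar ν x ∧ ubar ν x ≤ ub ν x) ∧
      ∀ ν, ∀ v : L2Sp Ω, (∀ᵐ x ∂(volume.restrict Ω), ua ν x ≤ v x ∧ v x ≤ ub ν x) →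
        (1 / 2) * ‖χ0 ((∑ j, S j (ubar j)) - yd ν)‖ ^ 2 + (α / 2) * ‖ubar ν‖ ^ 2 ≤
        (1 / 2) * ‖χ0 ((∑ j, S j (Function.update ubar ν v j)) - yd ν)‖ ^ 2 +
          (α / 2) * ‖v‖ ^ 2 := by
  classical
  -- the operators
  set A : Fin N → (L2Sp Ω →L[ℝ] L2Sp Ω) := fun ν => χ0.comp (S ν) with hA
  set Ψ : USp N Ω →L[ℝ] L2Sp Ω :=
    ∑ ν, (A ν).comp (PiLp.proj (𝕜 := ℝ) 2 (fun _ : Fin N => L2Sp Ω) ν) with hΨ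
  set Γ : L2Sp Ω →L[ℝ] USp N Ω :=
    ((PiLp.continuousLinearEquiv 2 ℝ (fun _ : Fin N => L2Sp Ω)).symm.toContinuousLinearMap).comp
      (ContinuousLinearMap.pi fun ν => ContinuousLinearMap.adjoint (A ν)) with hΓ
  set B : USp N Ω →L[ℝ] USp N Ω :=
    Γ.comp Ψ + α • ContinuousLinearMap.id ℝ (USp N Ω) with hB
  set bb : USp N Ω := (WithLp.equiv 2 _).symm
    (fun ν => -(ContinuousLinearMap.adjoint (A ν) (χ0 (yd ν)))) with hbb
  have hΨapp : ∀ u : USp N Ω, Ψ u = ∑ ν, A ν (u ν) := by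
    intro u; simp [hΨ, ContinuousLinearMap.sum_apply]
  have hBapp : ∀ (u : USp N Ω) (ν : Fin N),
      (B u) ν = ContinuousLinearMap.adjoint (A ν) (Ψ u) + α • u ν := by
    intro u ν
    simp [hB, hΓ, ContinuousLinearMap.add_apply, ContinuousLinearMap.comp_apply]
  have hbapp : ∀ ν, bb ν = -(ContinuousLinearMap.adjoint (A ν) (χ0 (yd ν))) := by
    intro ν; simp [hbb]
  have hmono : ∀ z : USp N Ω, α * ‖z‖ ^ 2 ≤ ⟪B z, z⟫ := by
    intro z
    have h1 : ⟪B z, z⟫ = ∑ ν, (⟪Ψ z, A ν (z ν)⟫ + α * ‖z ν‖ ^ 2) := by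
      rw [PiLp.inner_apply]
      refine Finset.sum_congr rfl fun ν _ => ?_
      rw [hBapp z ν, inner_add_left, real_inner_smul_left,
        ContinuousLinearMap.adjoint_inner_left, real_inner_self_eq_norm_sq]
    have h2 : ∑ ν, ⟪Ψ z, A ν (z ν)⟫ = ‖Ψ z‖ ^ 2 := by
      rw [← inner_sum, ← hΨapp, real_inner_self_eq_norm_sq]
    have h3 : ∑ ν, α * ‖z ν‖ ^ 2 = α * ‖z‖ ^ 2 := by
      rw [← Finset.mul_sum, PiLp.norm_sq_eq_of_L2]
    rw [h1, Finset.sum_add_distrib, h2, h3]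
    nlinarith [sq_nonneg ‖Ψ z‖]
  -- the admissible set
  set K : Set (USp N Ω) := {u | ∀ ν, u ν ∈ Set.Icc (ua ν) (ub ν)} with hK
  have hbdd : ∀ (ν : Fin N) (f : L2Sp Ω),
      (∀ᵐ x ∂(volume.restrict Ω), ua ν x ≤ f x ∧ f x ≤ ub ν x)
        ↔ f ∈ Set.Icc (ua ν) (ub ν) := by
    intro ν f
    rw [Filter.eventually_and]
    exact and_congr (Lp.coeFn_le _ _) (Lp.coeFn_le _ _)
  have hKne : K.Nonempty := by
    refine ⟨(WithLp.equiv 2 _).symm ua, fun ν => ?_⟩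
    simp only [WithLp.equiv_symm_apply, PiLp.toLp_apply]
    exact ⟨le_rfl, (Lp.coeFn_le _ _).1 (hab ν)⟩
  have hKcl : IsClosed K := by
    have : K = ⋂ ν, (PiLp.proj (𝕜 := ℝ) 2 (fun _ : Fin N => L2Sp Ω) ν) ⁻¹'
        Set.Icc (ua ν) (ub ν) := by
      ext u; simp [hK, PiLp.proj_apply]
    rw [this]
    exact isClosed_iInter fun ν => isClosed_Icc.preimage (PiLp.proj 2 _ ν).continuous
  have hKconv : Convex ℝ K := by
    have : K = ⋂ ν, (PiLp.projₗ (𝕜 := ℝ) 2 (fun _ : Fin N => L2Sp Ω) ν) ⁻¹'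
        Set.Icc (ua ν) (ub ν) := by
      ext u; simp [hK, PiLp.projₗ]
    rw [this]
    exact convex_iInter fun ν => (convex_Icc _ _).linear_preimage _
  -- rewriting the costs
  have hsumupd : ∀ (u : USp N Ω) (ν : Fin N) (v : L2Sp Ω),
      ∑ j, S j (Function.update u ν v j) = S ν v + ((∑ j, S j (u j)) - S ν (u ν)) := by
    intro u ν v
    have hpt : ∀ j, S j (Function.update u ν v j)
        = Function.update (fun j => S j (u j)) ν (S ν v) j := by
      intro j
      rcases eq_or_ne j ν with rfl | hj
      · simp
      · simp [Function.update_of_ne hj]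
    rw [Finset.sum_congr rfl fun j _ => hpt j,
      Finset.sum_update_of_mem (Finset.mem_univ ν)]
    congr 1
    rw [Finset.sum_sdiff_eq_sub (Finset.singleton_subset_iff.2 (Finset.mem_univ ν)),
      Finset.sum_singleton]
  have hAv : ∀ (ν : Fin N) (w : L2Sp Ω), χ0 (S ν w) = A ν w := fun ν w => rfl
  have hcost : ∀ (u : USp N Ω) (ν : Fin N) (v : L2Sp Ω),
      χ0 ((∑ j, S j (Function.update u ν v j)) - yd ν)
        = A ν v + (Ψ u - A ν (u ν) - χ0 (yd ν)) := by
    intro u ν v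
    rw [hsumupd u ν v]
    have hXsum : χ0 (∑ j, S j (u j)) = Ψ u := by
      rw [map_sum, hΨapp]
      exact Finset.sum_congr rfl fun j _ => hAv j (u j)
    rw [map_sub, map_add, map_sub, hXsum, hAv ν v, hAv ν (u ν)]
    abel
  have hcost0 : ∀ (u : USp N Ω) (ν : Fin N),
      χ0 ((∑ j, S j (u j)) - yd ν) = A ν (u ν) + (Ψ u - A ν (u ν) - χ0 (yd ν)) := by
    intro u ν
    have := hcost u ν (u ν)
    rwa [Function.update_eq_self] at this
  have hgrad : ∀ (u : USp N Ω) (ν : Fin N),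
      ContinuousLinearMap.adjoint (A ν) (A ν (u ν) + (Ψ u - A ν (u ν) - χ0 (yd ν)))
        + α • u ν = (B u + bb) ν := by
    intro u ν
    have h1 : A ν (u ν) + (Ψ u - A ν (u ν) - χ0 (yd ν)) = Ψ u - χ0 (yd ν) := by abel
    rw [h1, map_sub]
    simp only [PiLp.add_apply, hBapp u ν, hbapp ν]
    abel
  -- the componentwise equivalence between optimality and the variational inequality
  have hcomp : ∀ (u : USp N Ω) (ν : Fin N), u ν ∈ Set.Icc (ua ν) (ub ν) →
      ((∀ v : L2Sp Ω, (∀ᵐ x ∂(volume.restrict Ω), ua ν x ≤ v x ∧ v x ≤ ub ν x) →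
        (1 / 2) * ‖χ0 ((∑ j, S j (u j)) - yd ν)‖ ^ 2 + (α / 2) * ‖u ν‖ ^ 2 ≤
        (1 / 2) * ‖χ0 ((∑ j, S j (Function.update u ν v j)) - yd ν)‖ ^ 2 +
          (α / 2) * ‖v‖ ^ 2)
      ↔ ∀ v ∈ Set.Icc (ua ν) (ub ν), 0 ≤ ⟪(B u + bb) ν, v - u ν⟫) := by
    intro u ν hν
    have h1 := quad_min_iff (convex_Icc (ua ν) (ub ν)) (A ν)
      (Ψ u - A ν (u ν) - χ0 (yd ν)) α hα hν
    constructor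
    · intro h v hv
      have h2 : ∀ w ∈ Set.Icc (ua ν) (ub ν),
          (1/2) * ‖A ν (u ν) + (Ψ u - A ν (u ν) - χ0 (yd ν))‖ ^ 2 + (α/2) * ‖u ν‖ ^ 2
          ≤ (1/2) * ‖A ν w + (Ψ u - A ν (u ν) - χ0 (yd ν))‖ ^ 2 + (α/2) * ‖w‖ ^ 2 := by
        intro w hw
        have := h w ((hbdd ν w).2 hw)
        rwa [hcost0 u ν, hcost u ν w] at this
      have := (h1.1 h2) v hv
      rwa [hgrad u ν] at this
    · intro h v hv
      have h2 := h1.2 fun w hw => by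
        have := h w hw
        rwa [← hgrad u ν] at this
      have := h2 v ((hbdd ν v).1 hv)
      rwa [← hcost0 u ν, ← hcost u ν v] at this
  -- the full equivalence with the variational inequality for `B`, `bb`
  have hfulliff : ∀ u : USp N Ω,
      ((∀ ν, ∀ᵐ x ∂(volume.restrict Ω), ua ν x ≤ u ν x ∧ u ν x ≤ ub ν x) ∧
      ∀ ν, ∀ v : L2Sp Ω, (∀ᵐ x ∂(volume.restrict Ω), ua ν x ≤ v x ∧ v x ≤ ub ν x) →
        (1 / 2) * ‖χ0 ((∑ j, S j (u j)) - yd ν)‖ ^ 2 + (α / 2) * ‖u ν‖ ^ 2 ≤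
        (1 / 2) * ‖χ0 ((∑ j, S j (Function.update u ν v j)) - yd ν)‖ ^ 2 +
          (α / 2) * ‖v‖ ^ 2)
      ↔ (u ∈ K ∧ ∀ v ∈ K, 0 ≤ ⟪B u + bb, v - u⟫) := by
    intro u
    constructor
    · rintro ⟨h1, h2⟩
      have huK : u ∈ K := fun ν => (hbdd ν (u ν)).1 (h1 ν)
      refine ⟨huK, fun v hv => ?_⟩
      rw [PiLp.inner_apply]
      refine Finset.sum_nonneg fun ν _ => ?_
      have := ((hcomp u ν (huK ν)).1 (h2 ν)) (v ν) (hv ν)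
      simpa [PiLp.sub_apply] using this
    · rintro ⟨huK, hVI⟩
      refine ⟨fun ν => (hbdd ν (u ν)).2 (huK ν), fun ν => ?_⟩
      refine (hcomp u ν (huK ν)).2 fun w hw => ?_
      have hvvK : (WithLp.equiv 2 (∀ _ : Fin N, L2Sp Ω)).symm (Function.update u ν w) ∈ K := by
        intro j
        rcases eq_or_ne j ν with rfl | hj
        · simpa [WithLp.equiv_symm_apply, PiLp.toLp_apply] using hw
        · simpa [WithLp.equiv_symm_apply, PiLp.toLp_apply, Function.update_of_ne hj] using huK j
      have hfull := hVI _ hvvK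
      rw [PiLp.inner_apply] at hfull
      have hsum : ∑ j, ⟪(B u + bb) j,
            ((WithLp.equiv 2 (∀ _ : Fin N, L2Sp Ω)).symm (Function.update u ν w) - u) j⟫
          = ⟪(B u + bb) ν,
            ((WithLp.equiv 2 (∀ _ : Fin N, L2Sp Ω)).symm (Function.update u ν w) - u) ν⟫ :=
        Finset.sum_eq_single_of_mem ν (Finset.mem_univ ν) fun j _ hj => by
          simp [PiLp.sub_apply, WithLp.equiv_symm_apply, PiLp.toLp_apply, Function.update_of_ne hj]
      rw [hsum] at hfull
      simpa [PiLp.sub_apply, WithLp.equiv_symm_apply, PiLp.toLp_apply] using hfull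
  obtain ⟨u₀, h₀, hun⟩ := vi_unique hKne hKcl hKconv B bb α hα hmono
  exact ⟨u₀, (hfulliff u₀).2 h₀, fun y hy => hun y ((hfulliff y).1 hy)⟩
end
end

section
/- Let α > (1/4) Σ_{ν=1}^N ‖χ_Z(S_ν − χ_ν S_ν)‖²_{L²(Ω)→L²(Ω)}, μ, ψ ∈ L²(Ω) and ρ > 0. Then the map F : U → U with components F^ν(u) = S_ν*(χ_ν(Su − y_d^ν) + (μ + ρ(Su − ψ))₊) + α u^ν is strongly monotone: for all u, v ∈ U, (F(u) − F(v), u − v)_U ≥ (α − (1/4) Σ_{ν=1}^N ‖χ_Z(S_ν − χ_ν S_ν)‖²_{L²(Ω)→L²(Ω)}) ‖u − v‖²_U. -/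
open MeasureTheory
open scoped RealInnerProductSpace ENNReal

set_option maxHeartbeats 2000000
noncomputable section

section Aux

variable {X : Type*} [MeasurableSpace X] {μ : Measure X}

lemma inner_eq_integral (f g : Lp ℝ 2 μ) : ⟪f, g⟫ = ∫ x, f x * g x ∂μ := by
  rw [MeasureTheory.L2.inner_def]
  simp [RCLike.inner_apply]
  exact integral_congr_ae (Filter.Eventually.of_forall fun x => mul_comm _ _)

lemma inner_eq_integral' (f g : Lp ℝ 2 μ) (F G : X → ℝ) (hf : ⇑f =ᵐ[μ] F)
    (hg : ⇑g =ᵐ[μ] G) : ⟪f, g⟫ = ∫ x, F x * G x ∂μ := by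
  rw [inner_eq_integral]
  exact integral_congr_ae (hf.mul hg)

lemma posPart_inner_nonneg (a b : Lp ℝ 2 μ) :
    0 ≤ ⟪Lp.posPart a - Lp.posPart b, a - b⟫ := by
  rw [inner_eq_integral' _ _ (fun x => max (a x) 0 - max (b x) 0) (fun x => a x - b x)
    ?_ ?_]
  · refine integral_nonneg_of_ae (Filter.Eventually.of_forall fun x => ?_)
    dsimp only
    rcases le_total (a x) (b x) with h | h
    · have : (max (a x) 0 - max (b x) 0) * (a x - b x)
          = (max (b x) 0 - max (a x) 0) * (b x - a x) := by ring
      rw [this]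
      exact mul_nonneg (sub_nonneg.2 (max_le_max h le_rfl)) (sub_nonneg.2 h)
    · exact mul_nonneg (sub_nonneg.2 (max_le_max h le_rfl)) (sub_nonneg.2 h)
  · filter_upwards [Lp.coeFn_sub (Lp.posPart a) (Lp.posPart b), Lp.coeFn_posPart a,
      Lp.coeFn_posPart b] with x h1 h2 h3
    rw [h1, Pi.sub_apply, h2, h3]
  · filter_upwards [Lp.coeFn_sub a b] with x h1
    rw [h1, Pi.sub_apply]

omit [MeasurableSpace X] in
lemma ind_mul_eq {s t : Set X} (hst : s ⊆ t) (e h : X → ℝ) (x : X) :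
    s.indicator e x * h x = t.indicator e x * s.indicator h x := by
  by_cases hx : x ∈ s
  · simp [Set.indicator_of_mem hx, Set.indicator_of_mem (hst hx)]
  · simp [Set.indicator_of_notMem hx]

theorem stmt6_general {N : ℕ}
    (Ων : Fin N → Set X)
    (S : Fin N → (Lp ℝ 2 μ →L[ℝ] Lp ℝ 2 μ))
    (χ : Fin N → (Lp ℝ 2 μ →L[ℝ] Lp ℝ 2 μ))
    (hχ : ∀ ν (f : Lp ℝ 2 μ), ⇑(χ ν f) =ᵐ[μ] (Ων ν).indicator ⇑f)
    (χZ : Lp ℝ 2 μ →L[ℝ] Lp ℝ 2 μ)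
    (hχZ : ∀ f : Lp ℝ 2 μ, ⇑(χZ f) =ᵐ[μ] (⋃ ν, Ων ν).indicator ⇑f)
    (yd : Fin N → Lp ℝ 2 μ)
    (m ψ : Lp ℝ 2 μ) (ρ : ℝ) (hρ : 0 < ρ) (α : ℝ)
    (F : PiLp 2 (fun _ : Fin N => Lp ℝ 2 μ) → PiLp 2 (fun _ : Fin N => Lp ℝ 2 μ))
    (hF : ∀ (u : PiLp 2 (fun _ : Fin N => Lp ℝ 2 μ)) (ν : Fin N),
      F u ν = ContinuousLinearMap.adjoint (S ν)
          (χ ν ((∑ j, S j (u j)) - yd ν) +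
            Lp.posPart (m + ρ • ((∑ j, S j (u j)) - ψ))) + α • u ν) :
    ∀ u v : PiLp 2 (fun _ : Fin N => Lp ℝ 2 μ),
      ⟪F u - F v, u - v⟫ ≥
        (α - (1 / 4) * ∑ ν, ‖χZ ∘L (S ν - χ ν ∘L S ν)‖ ^ 2) * ‖u - v‖ ^ 2 := by
  intro u v
  classical
  set w : PiLp 2 (fun _ : Fin N => Lp ℝ 2 μ) := u - v with hw
  have hwj : ∀ j, w j = u j - v j := fun j => PiLp.sub_apply (x := u) (y := v) (i := j)
  set e : Lp ℝ 2 μ := ∑ j, S j (w j) with he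
  have hSuv : (∑ j, S j (u j)) - (∑ j, S j (v j)) = e := by
    rw [he, ← Finset.sum_sub_distrib]
    exact Finset.sum_congr rfl fun j _ => by rw [hwj j, map_sub]
  set T : Fin N → (Lp ℝ 2 μ →L[ℝ] Lp ℝ 2 μ) := fun ν => χZ ∘L (S ν - χ ν ∘L S ν) with hT
  set a : Lp ℝ 2 μ := m + ρ • ((∑ j, S j (u j)) - ψ) with ha
  set b : Lp ℝ 2 μ := m + ρ • ((∑ j, S j (v j)) - ψ) with hb
  have hab : a - b = ρ • e := by
    rw [ha, hb, ← hSuv]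
    module
  -- the components of the difference
  have hFd : ∀ ν, (F u - F v) ν =
      (ContinuousLinearMap.adjoint (S ν)) (χ ν e + (Lp.posPart a - Lp.posPart b))
        + α • (w ν) := by
    intro ν
    have h0 : (F u - F v) ν = F u ν - F v ν := PiLp.sub_apply (x := F u) (y := F v) (i := ν)
    have h1 : χ ν ((∑ j, S j (u j)) - yd ν) - χ ν ((∑ j, S j (v j)) - yd ν) = χ ν e := by
      rw [← map_sub, ← hSuv]
      congr 1
      abel
    rw [h0, hF u ν, hF v ν, hwj ν, ← ha, ← hb, ← h1]
    simp only [map_add, map_sub, smul_sub]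
    abel
  -- key integral identities
  have key1 : ∀ (ν : Fin N) (g : Lp ℝ 2 μ), ⟪χ ν e, g⟫ = ⟪χZ e, χ ν g⟫ := by
    intro ν g
    rw [inner_eq_integral' (χ ν e) g ((Ων ν).indicator ⇑e) ⇑g (hχ ν e)
        (Filter.EventuallyEq.refl _ _),
      inner_eq_integral' (χZ e) (χ ν g) ((⋃ j, Ων j).indicator ⇑e) ((Ων ν).indicator ⇑g)
        (hχZ e) (hχ ν g)]
    exact integral_congr_ae (Filter.Eventually.of_forall fun x =>
      ind_mul_eq (Set.subset_iUnion Ων ν) ⇑e ⇑g x)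
  have key2 : ∀ g : Lp ℝ 2 μ, ⟪χZ e, g⟫ = ⟪χZ e, χZ g⟫ := by
    intro g
    rw [inner_eq_integral' (χZ e) g ((⋃ j, Ων j).indicator ⇑e) ⇑g (hχZ e)
        (Filter.EventuallyEq.refl _ _),
      inner_eq_integral' (χZ e) (χZ g) ((⋃ j, Ων j).indicator ⇑e) ((⋃ j, Ων j).indicator ⇑g)
        (hχZ e) (hχZ g)]
    exact integral_congr_ae (Filter.Eventually.of_forall fun x =>
      ind_mul_eq (subset_refl _) ⇑e ⇑g x)
  -- expand the inner product
  have hinner : ⟪F u - F v, w⟫ =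
      (∑ ν, ⟪χ ν e, S ν (w ν)⟫) + ⟪Lp.posPart a - Lp.posPart b, e⟫ + α * ‖w‖ ^ 2 := by
    rw [PiLp.inner_apply]
    have hterm : ∀ ν : Fin N, ⟪(F u - F v) ν, w ν⟫ =
        ⟪χ ν e, S ν (w ν)⟫ + ⟪Lp.posPart a - Lp.posPart b, S ν (w ν)⟫ + α * ‖w ν‖ ^ 2 := by
      intro ν
      rw [hFd ν, inner_add_left, ContinuousLinearMap.adjoint_inner_left, inner_add_left,
        real_inner_smul_left, real_inner_self_eq_norm_sq]
    rw [Finset.sum_congr rfl fun ν _ => hterm ν, Finset.sum_add_distrib,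
      Finset.sum_add_distrib, ← inner_sum, ← he, ← Finset.mul_sum,
      ← PiLp.norm_sq_eq_of_L2]
  -- positivity of the posPart term
  have hP : 0 ≤ ⟪Lp.posPart a - Lp.posPart b, e⟫ := by
    have h0 := posPart_inner_nonneg a b
    rw [hab, real_inner_smul_right] at h0
    nlinarith
  -- rewrite the χ-term
  have hT1 : ∀ ν, ⟪χ ν e, S ν (w ν)⟫ = ⟪χZ e, S ν (w ν)⟫ - ⟪χZ e, T ν (w ν)⟫ := by
    intro ν
    rw [key1 ν (S ν (w ν))]
    have h2 : χ ν (S ν (w ν)) = S ν (w ν) - (S ν - χ ν ∘L S ν) (w ν) := by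
      simp [ContinuousLinearMap.sub_apply, ContinuousLinearMap.comp_apply]
    rw [h2, inner_sub_right, key2 ((S ν - χ ν ∘L S ν) (w ν))]
    rfl
  have hsum1 : ∑ ν, ⟪χZ e, S ν (w ν)⟫ = ‖χZ e‖ ^ 2 := by
    rw [← inner_sum, ← he, key2 e, real_inner_self_eq_norm_sq]
  -- bounds
  have hbd : ∀ ν, ⟪χZ e, T ν (w ν)⟫ ≤ ‖χZ e‖ * (‖T ν‖ * ‖w ν‖) := fun ν =>
    le_trans (real_inner_le_norm _ _)
      (mul_le_mul_of_nonneg_left (ContinuousLinearMap.le_opNorm _ _) (norm_nonneg _))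
  set t := ‖χZ e‖ with ht'
  set B := ∑ ν, ‖T ν‖ * ‖w ν‖ with hB
  have hAle : ∑ ν, ⟪χZ e, T ν (w ν)⟫ ≤ t * B := by
    rw [hB, Finset.mul_sum]
    exact Finset.sum_le_sum fun ν _ => hbd ν
  have hCS : B ^ 2 ≤ (∑ ν, ‖T ν‖ ^ 2) * ∑ ν, ‖w ν‖ ^ 2 :=
    Finset.sum_mul_sq_le_sq_mul_sq _ _ _
  have hW : ∑ ν, ‖w ν‖ ^ 2 = ‖w‖ ^ 2 := (PiLp.norm_sq_eq_of_L2 _ _).symm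
  have hKnn : (0:ℝ) ≤ ∑ ν, ‖T ν‖ ^ 2 := Finset.sum_nonneg fun ν _ => sq_nonneg _
  have htnn : (0:ℝ) ≤ t := norm_nonneg _
  have hBnn : (0:ℝ) ≤ B := Finset.sum_nonneg fun ν _ =>
    mul_nonneg (norm_nonneg _) (norm_nonneg _)
  have hWnn : (0:ℝ) ≤ ‖w‖ ^ 2 := sq_nonneg _
  -- put it together
  rw [hinner, Finset.sum_congr rfl fun ν _ => hT1 ν, Finset.sum_sub_distrib, hsum1]
  rw [hW] at hCS
  nlinarith [sq_nonneg (t - B / 2), hAle, hCS, hP]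

end Aux

/-- If `α` exceeds the offset, `μ, ψ ∈ L²(Ω)` and `ρ > 0`, then the map
`F` with components `F^ν(u) = S_ν*(χ_ν(Su − y_d^ν) + (μ + ρ(Su − ψ))₊) + α u^ν` is strongly
monotone with constant `α − offset`. -/
theorem stmt6 {n N : ℕ} (Ω : Set (EuclideanSpace ℝ (Fin n)))
    (Ων : Fin N → Set (EuclideanSpace ℝ (Fin n))) (hΩν : ∀ ν, Ων ν ⊆ Ω)
    (S : Fin N → (L2Sp Ω →L[ℝ] L2Sp Ω))
    -- `χ ν` is multiplication by the characteristic function of `Ω_ν` on `L²(Ω)`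
    (χ : Fin N → (L2Sp Ω →L[ℝ] L2Sp Ω))
    (hχ : ∀ ν (f : L2Sp Ω), ⇑(χ ν f) =ᵐ[volume.restrict Ω] (Ων ν).indicator ⇑f)
    -- `χZ` is multiplication by the characteristic function of `Z = ⋃ ν, Ω_ν`
    (χZ : L2Sp Ω →L[ℝ] L2Sp Ω)
    (hχZ : ∀ f : L2Sp Ω, ⇑(χZ f) =ᵐ[volume.restrict Ω] (⋃ ν, Ων ν).indicator ⇑f)
    (yd : Fin N → L2Sp Ω)
    (m ψ : L2Sp Ω) (ρ : ℝ) (hρ : 0 < ρ)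
    (α : ℝ)
    (hα : α > (1 / 4) * ∑ ν, ‖χZ ∘L (S ν - χ ν ∘L S ν)‖ ^ 2)
    (F : USp N Ω → USp N Ω)
    (hF : ∀ (u : USp N Ω) (ν : Fin N),
      F u ν = ContinuousLinearMap.adjoint (S ν)
          (χ ν ((∑ j, S j (u j)) - yd ν) +
            Lp.posPart (m + ρ • ((∑ j, S j (u j)) - ψ))) + α • u ν) :
    ∀ u v : USp N Ω,
      ⟪F u - F v, u - v⟫ ≥
        (α - (1 / 4) * ∑ ν, ‖χZ ∘L (S ν - χ ν ∘L S ν)‖ ^ 2) * ‖u - v‖ ^ 2 :=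
  stmt6_general Ων S χ hχ χZ hχZ yd m ψ ρ hρ α F hF
end
end

section
/- Let Ω have finite measure, a ∈ L^r(Ω), and 1 ≤ p ≤ r < q ≤ ∞. Then the map m : L^q(Ω) → L^p(Ω), m(u) := max(a, u) (pointwise a.e.), is Newton differentiable, with Newton derivative at w given by multiplication with h(w), where h(w)(x) = 1 if w(x) > a(x) and h(w)(x) = 0 otherwise; that is, for every u ∈ L^q(Ω), ‖m(u+v) − m(u) − h(u+v)·v‖_{L^p(Ω)} = o(‖v‖_{L^q(Ω)}) as ‖v‖_{L^q(Ω)} → 0. -/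
open MeasureTheory Filter Asymptotics Topology
open scoped ENNReal

noncomputable section

lemma stmt9_aux (A U V : ℝ) :
    |max A (U + V) - max A U - (if A < U + V then V else 0)| ≤ |V| ∧
    (max A (U + V) - max A U - (if A < U + V then V else 0) ≠ 0 →
      0 < |U - A| ∧ |U - A| ≤ |V|) := by
  rcases le_or_gt (U + V) A with h1 | h1
  · rw [if_neg (not_lt.2 h1), max_eq_left h1]
    rcases le_or_gt U A with h2 | h2
    · rw [max_eq_left h2]; simp
    · rw [max_eq_right h2.le]
      have h4 : |U - A| ≤ |V| := by
        rw [abs_of_pos (by linarith : (0:ℝ) < U - A)]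
        exact (by linarith : U - A ≤ -V).trans (neg_le_abs V)
      have he : |A - U - 0| = |U - A| := by rw [sub_zero, abs_sub_comm]
      exact ⟨he.le.trans h4, fun _ => ⟨abs_pos.2 (by linarith), h4⟩⟩
  · rw [if_pos h1, max_eq_right h1.le]
    rcases le_or_gt U A with h2 | h2
    · rw [max_eq_left h2]
      have he : U + V - A - V = U - A := by ring
      rw [he]
      have h4 : |U - A| ≤ |V| := by
        rw [abs_of_nonpos (by linarith)]
        exact (by linarith : -(U - A) ≤ V).trans (le_abs_self V)
      exact ⟨h4, fun hne => ⟨abs_pos.2 hne, h4⟩⟩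
    · rw [max_eq_right h2.le]
      constructor
      · have : U + V - U - V = 0 := by ring
        rw [this]; simp
      · intro hne; exact absurd (by ring) hne

set_option maxHeartbeats 2000000 in
/-- On a bounded (hence finite-measure) domain `Ω`, for `a ∈ L^r(Ω)` and
`1 ≤ p ≤ r < q ≤ ∞`, the pointwise map `m(u) = max(a, u) : L^q(Ω) → L^p(Ω)` is Newton
differentiable, the Newton derivative at `w` being multiplication by the indicator of
`{w > a}`. -/
theorem stmt9 {n : ℕ} (Ω : Set (EuclideanSpace ℝ (Fin n)))
    (hΩbd : Bornology.IsBounded Ω)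
    (p r q : ℝ≥0∞) [Fact (1 ≤ p)] [Fact (1 ≤ r)] [Fact (1 ≤ q)]
    (hpr : p ≤ r) (hrq : r < q)
    (a : Lp ℝ r (volume.restrict Ω))
    -- `m` is the pointwise a.e. map `u ↦ max(a, u)`, as a map `L^q → L^p`
    (m : Lp ℝ q (volume.restrict Ω) → Lp ℝ p (volume.restrict Ω))
    (hm : ∀ u, ⇑(m u) =ᵐ[volume.restrict Ω] fun x => max (a x) (u x))
    -- `H w` is multiplication by the indicator of `{x | w x > a x}`
    (H : Lp ℝ q (volume.restrict Ω) →
      (Lp ℝ q (volume.restrict Ω) →L[ℝ] Lp ℝ p (volume.restrict Ω)))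
    (hH : ∀ w v, ⇑(H w v) =ᵐ[volume.restrict Ω]
      ({x | a x < w x}).indicator ⇑v) :
    ∀ u : Lp ℝ q (volume.restrict Ω),
      (fun v => m (u + v) - m u - H (u + v) v) =o[𝓝 0]
        fun v : Lp ℝ q (volume.restrict Ω) => v := by
  intro u
  haveI : IsFiniteMeasure (volume.restrict Ω : Measure (EuclideanSpace ℝ (Fin n))) := ⟨by
    rw [Measure.restrict_apply_univ]; exact hΩbd.measure_lt_top⟩
  -- basic exponent facts
  have hp1 : (1 : ℝ≥0∞) ≤ p := Fact.out
  have hq1 : (1 : ℝ≥0∞) ≤ q := Fact.out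
  have hp0 : p ≠ 0 := (lt_of_lt_of_le zero_lt_one hp1).ne'
  have hq0 : q ≠ 0 := (lt_of_lt_of_le zero_lt_one hq1).ne'
  have hpq : p < q := lt_of_le_of_lt hpr hrq
  have hinvlt : q⁻¹ < p⁻¹ := ENNReal.inv_lt_inv.2 hpq
  set s : ℝ≥0∞ := (p⁻¹ - q⁻¹)⁻¹ with hsdef
  have hs0 : s ≠ 0 := by
    rw [hsdef, Ne, ENNReal.inv_eq_zero]
    exact fun h => (ENNReal.inv_ne_top.2 hp0) (top_le_iff.1 (h ▸ tsub_le_self.trans (le_of_eq rfl)) ▸ rfl)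
  have hstop : s ≠ ∞ := by
    rw [hsdef, Ne, ENNReal.inv_eq_top]
    exact (tsub_pos_of_lt hinvlt).ne'
  have hst0 : 0 < s.toReal := ENNReal.toReal_pos hs0 hstop
  have hpqs : 1 / p = 1 / s + 1 / q := by
    simp only [one_div, hsdef, inv_inv]
    exact (tsub_add_cancel_of_le hinvlt.le).symm
  -- measurable representative of u - a
  have hu := (Lp.aestronglyMeasurable u).aemeasurable
  have ha := (Lp.aestronglyMeasurable a).aemeasurable
  set g : EuclideanSpace ℝ (Fin n) → ℝ := fun x => hu.mk _ x - ha.mk _ x with hgdef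
  have hgmeas : Measurable g := hu.measurable_mk.sub ha.measurable_mk
  have hgae : (fun x => u x - a x) =ᵐ[(volume.restrict Ω)] g := hu.ae_eq_mk.sub ha.ae_eq_mk
  rw [isLittleO_iff]
  intro c hc
  -- the budget η
  set K : ℝ≥0∞ := ENNReal.ofReal c ^ s.toReal with hKdef
  have hK0 : K ≠ 0 := (ENNReal.rpow_pos (ENNReal.ofReal_pos.2 hc) ENNReal.ofReal_ne_top).ne'
  have hKtop : K ≠ ∞ := ENNReal.rpow_ne_top_of_nonneg hst0.le ENNReal.ofReal_ne_top
  set η : ℝ≥0∞ := K / 2 with hηdef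
  have hη0 : 0 < η := ENNReal.div_pos hK0 (by norm_num)
  have hηtop : η ≠ ∞ := by
    rw [hηdef]
    exact (ENNReal.half_le_self.trans_lt hKtop.lt_top).ne
  -- choose ε with (volume.restrict Ω) {0 < |g| ≤ ε} ≤ η
  obtain ⟨ε, hεpos, hBη⟩ : ∃ ε : ℝ, 0 < ε ∧ (volume.restrict Ω) {x | 0 < |g x| ∧ |g x| ≤ ε} ≤ η := by
    have htend : Tendsto (fun k : ℕ => (volume.restrict Ω) {x | 0 < |g x| ∧ |g x| ≤ 1 / ((k : ℝ) + 1)})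
        atTop (𝓝 0) := by
      have hmeaspart : ∀ k : ℕ,
          NullMeasurableSet {x | 0 < |g x| ∧ |g x| ≤ 1 / ((k : ℝ) + 1)} (volume.restrict Ω) := fun k =>
        (((measurableSet_lt measurable_const hgmeas.abs).inter
          (measurableSet_le hgmeas.abs measurable_const))).nullMeasurableSet
      have hanti : Antitone fun k : ℕ => {x | 0 < |g x| ∧ |g x| ≤ 1 / ((k : ℝ) + 1)} := by
        intro j k hjk x hx
        refine ⟨hx.1, hx.2.trans ?_⟩
        apply one_div_le_one_div_of_le (by positivity)
        exact add_le_add (Nat.cast_le.2 hjk) le_rfl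
      have h := tendsto_measure_iInter_atTop hmeaspart hanti
        ⟨0, measure_ne_top (volume.restrict Ω) _⟩
      have hempty : (⋂ k : ℕ, {x | 0 < |g x| ∧ |g x| ≤ 1 / ((k : ℝ) + 1)}) = ∅ := by
        ext x
        simp only [Set.mem_iInter, Set.mem_setOf_eq, Set.mem_empty_iff_false, iff_false,
          not_forall]
        by_cases hg : 0 < |g x|
        · obtain ⟨k, hk⟩ := exists_nat_one_div_lt hg
          exact ⟨k, fun h => absurd h.2 (not_le.2 hk)⟩
        · exact ⟨0, fun h => hg h.1⟩
      rw [hempty, measure_empty] at h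
      exact h
    obtain ⟨N, hN⟩ := (htend.eventually_lt_const hη0).exists
    exact ⟨1 / ((N : ℝ) + 1), by positivity, hN.le⟩
  have hεE0 : ENNReal.ofReal ε ≠ 0 := (ENNReal.ofReal_pos.2 hεpos).ne'
  -- choose δ controlling (volume.restrict Ω) {ε ≤ |f|} for small f in L^q
  obtain ⟨δ, hδpos, hkey⟩ : ∃ δ : ℝ, 0 < δ ∧ ∀ f : EuclideanSpace ℝ (Fin n) → ℝ,
      AEStronglyMeasurable f (volume.restrict Ω) → eLpNorm f q (volume.restrict Ω) < ENNReal.ofReal δ →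
      (volume.restrict Ω) {x | ENNReal.ofReal ε ≤ (‖f x‖₊ : ℝ≥0∞)} ≤ η := by
    by_cases hqtop : q = ∞
    · refine ⟨ε, hεpos, fun f hf hlt => ?_⟩
      rw [hqtop, eLpNorm_exponent_top] at hlt
      have h0 : (volume.restrict Ω) {x | ENNReal.ofReal ε ≤ (‖f x‖₊ : ℝ≥0∞)} = 0 := by
        have h1 : ∀ᵐ x ∂(volume.restrict Ω), ¬ (ENNReal.ofReal ε ≤ (‖f x‖₊ : ℝ≥0∞)) := by
          filter_upwards [enorm_ae_le_eLpNormEssSup f (volume.restrict Ω)] with x hx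
          exact not_le.2 (hx.trans_lt hlt)
        rw [ae_iff] at h1
        simpa [not_not] using h1
      rw [h0]; exact bot_le
    · set t := q.toReal with htdef
      have ht : 0 < t := ENNReal.toReal_pos hq0 hqtop
      set δE : ℝ≥0∞ := (η * ENNReal.ofReal ε ^ t) ^ (1 / t) with hδEdef
      have hbase0 : η * ENNReal.ofReal ε ^ t ≠ 0 :=
        mul_ne_zero hη0.ne' (ENNReal.rpow_pos (ENNReal.ofReal_pos.2 hεpos) ENNReal.ofReal_ne_top).ne'
      have hbasetop : η * ENNReal.ofReal ε ^ t ≠ ∞ :=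
        ENNReal.mul_ne_top hηtop (ENNReal.rpow_ne_top_of_nonneg ht.le ENNReal.ofReal_ne_top)
      have hδE0 : δE ≠ 0 :=
        (ENNReal.rpow_pos (pos_iff_ne_zero.2 hbase0) hbasetop).ne'
      have hδEtop : δE ≠ ∞ := ENNReal.rpow_ne_top_of_nonneg (by positivity) hbasetop
      refine ⟨δE.toReal, ENNReal.toReal_pos hδE0 hδEtop, fun f hf hlt => ?_⟩
      rw [ENNReal.ofReal_toReal hδEtop] at hlt
      calc (volume.restrict Ω) {x | ENNReal.ofReal ε ≤ (‖f x‖₊ : ℝ≥0∞)}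
          ≤ (ENNReal.ofReal ε)⁻¹ ^ t * eLpNorm f q (volume.restrict Ω) ^ t :=
            meas_ge_le_mul_pow_eLpNorm_enorm (μ := volume.restrict Ω) hq0 hqtop hf hεE0
              (fun h => absurd h ENNReal.ofReal_ne_top)
        _ ≤ (ENNReal.ofReal ε)⁻¹ ^ t * δE ^ t := by
            gcongr
        _ = η := by
            rw [hδEdef, ← ENNReal.rpow_mul, one_div_mul_cancel ht.ne', ENNReal.rpow_one,
              mul_comm η, ← mul_assoc, ← ENNReal.mul_rpow_of_nonneg _ _ ht.le,
              ENNReal.inv_mul_cancel hεE0 ENNReal.ofReal_ne_top, ENNReal.one_rpow, one_mul]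
  -- eventual smallness
  have hδev : ∀ᶠ v : Lp ℝ q (volume.restrict Ω) in 𝓝 0, ‖v‖ < δ := by
    have hball := Metric.ball_mem_nhds (0 : Lp ℝ q (volume.restrict Ω)) hδpos
    filter_upwards [hball] with v hv
    simpa [dist_zero_right] using hv
  filter_upwards [hδev] with v hv
  -- set up the indicator set
  have hvm := (Lp.aestronglyMeasurable v).aemeasurable
  set vm : EuclideanSpace ℝ (Fin n) → ℝ := hvm.mk _ with hvmdef
  have hvmmeas : Measurable vm := hvm.measurable_mk
  set B : Set (EuclideanSpace ℝ (Fin n)) := {x | 0 < |g x| ∧ |g x| ≤ ε} with hBdef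
  set T : Set (EuclideanSpace ℝ (Fin n)) := {x | ENNReal.ofReal ε ≤ (‖vm x‖₊ : ℝ≥0∞)}
    with hTdef
  have hBmeas : MeasurableSet B := (measurableSet_lt measurable_const hgmeas.abs).inter
    (measurableSet_le hgmeas.abs measurable_const)
  have hTmeas : MeasurableSet T := measurableSet_le measurable_const hvmmeas.enorm
  set S : Set (EuclideanSpace ℝ (Fin n)) := B ∪ T with hSdef
  have hSmeas : MeasurableSet S := hBmeas.union hTmeas
  set φ : EuclideanSpace ℝ (Fin n) → ℝ := S.indicator fun _ => (1 : ℝ) with hφdef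
  have hφmeas : AEStronglyMeasurable φ (volume.restrict Ω) :=
    (measurable_const.indicator hSmeas).aestronglyMeasurable
  -- pointwise bound
  have hpt : ∀ᵐ x ∂(volume.restrict Ω), ‖(⇑(m (u + v) - m u - H (u + v) v)) x‖ ≤ ‖(φ • ⇑v) x‖ := by
    filter_upwards [Lp.coeFn_sub (m (u + v) - m u) (H (u + v) v),
      Lp.coeFn_sub (m (u + v)) (m u), hm (u + v), hm u, hH (u + v) v,
      Lp.coeFn_add u v, hvm.ae_eq_mk, hgae] with x e1 e2 e3 e4 e5 e6 e7 e8
    rw [e1]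
    simp only [Pi.sub_apply]
    rw [e2]
    simp only [Pi.sub_apply, e3, e4, e5]
    have e6' : (⇑(u + v)) x = u x + v x := by rw [e6]; rfl
    simp only [Set.indicator_apply, Set.mem_setOf_eq, e6']
    have haux := stmt9_aux (a x) (u x) (v x)
    have hsm : (φ • ⇑v) x = φ x * v x := rfl
    rw [hsm]
    by_cases hxS : x ∈ S
    · rw [hφdef, Set.indicator_of_mem hxS, one_mul]
      simpa [Real.norm_eq_abs] using haux.1
    · rw [hφdef, Set.indicator_of_notMem hxS, zero_mul, norm_zero, norm_le_zero_iff]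
      by_contra hne
      obtain ⟨hpos, hle⟩ := haux.2 hne
      have hxT : x ∉ T := fun h => hxS (Or.inr h)
      have hvε : |v x| < ε := by
        rw [hTdef, Set.mem_setOf_eq, not_le] at hxT
        have : (‖vm x‖₊ : ℝ≥0∞) = ENNReal.ofReal |vm x| := by
          rw [← Real.norm_eq_abs, ofReal_norm]; rfl
        rw [this, ENNReal.ofReal_lt_ofReal_iff hεpos] at hxT
        rw [e7]
        exact hxT
      have hxB : x ∈ B := by
        rw [hBdef, Set.mem_setOf_eq, ← e8]
        exact ⟨hpos, hle.trans hvε.le⟩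
      exact hxS (Or.inl hxB)
  -- combine
  have h1 : eLpNorm (⇑(m (u + v) - m u - H (u + v) v)) p (volume.restrict Ω) ≤ eLpNorm (φ • ⇑v) p (volume.restrict Ω) :=
    eLpNorm_mono_ae hpt
  have h2 : eLpNorm (φ • ⇑v) p (volume.restrict Ω) ≤ eLpNorm φ s (volume.restrict Ω) * eLpNorm (⇑v) q (volume.restrict Ω) :=
    eLpNorm_smul_le_mul_eLpNorm (Lp.aestronglyMeasurable v) hφmeas
      (hpqr := ⟨by simpa only [one_div] using hpqs.symm⟩)
  have h3 : eLpNorm φ s (volume.restrict Ω) = (volume.restrict Ω) S ^ (1 / s.toReal) := by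
    rw [hφdef, eLpNorm_indicator_const hSmeas hs0 hstop]
    simp
  have hTη : (volume.restrict Ω) T ≤ η := by
    apply hkey vm hvmmeas.aestronglyMeasurable
    rw [eLpNorm_congr_ae hvm.ae_eq_mk.symm]
    have : eLpNorm (⇑v) q (volume.restrict Ω) = ENNReal.ofReal ‖v‖ := by
      rw [Lp.norm_def, ENNReal.ofReal_toReal (Lp.eLpNorm_ne_top v)]
    rw [this]
    exact ENNReal.ofReal_lt_ofReal_iff hδpos |>.2 hv
  have hSK : (volume.restrict Ω) S ≤ K := by
    calc (volume.restrict Ω) S ≤ (volume.restrict Ω) B + (volume.restrict Ω) T := measure_union_le _ _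
      _ ≤ η + η := add_le_add hBη hTη
      _ = K := by rw [hηdef]; exact ENNReal.add_halves K
  have h4 : (volume.restrict Ω) S ^ (1 / s.toReal) ≤ ENNReal.ofReal c := by
    calc (volume.restrict Ω) S ^ (1 / s.toReal) ≤ K ^ (1 / s.toReal) :=
          ENNReal.rpow_le_rpow hSK (by positivity)
      _ = ENNReal.ofReal c := by
          rw [hKdef, ← ENNReal.rpow_mul, mul_one_div_cancel hst0.ne', ENNReal.rpow_one]
  have hmain : eLpNorm (⇑(m (u + v) - m u - H (u + v) v)) p (volume.restrict Ω)
      ≤ ENNReal.ofReal c * eLpNorm (⇑v) q (volume.restrict Ω) := by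
    refine h1.trans (h2.trans ?_)
    rw [h3]
    exact mul_le_mul_left h4 _
  rw [Lp.norm_def, Lp.norm_def]
  calc (eLpNorm (⇑(m (u + v) - m u - H (u + v) v)) p (volume.restrict Ω)).toReal
      ≤ (ENNReal.ofReal c * eLpNorm (⇑v) q (volume.restrict Ω)).toReal := by
        apply ENNReal.toReal_mono _ hmain
        exact ENNReal.mul_ne_top ENNReal.ofReal_ne_top (Lp.eLpNorm_ne_top v)
    _ = c * (eLpNorm (⇑v) q (volume.restrict Ω)).toReal := by
        rw [ENNReal.toReal_mul, ENNReal.toReal_ofReal hc.le]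
end
end

section
/- Let Ω have finite measure, q > 2, and for each ν = 1,…,N let a^ν, b^ν ∈ L²(Ω) with a^ν ≤ b^ν a.e. Then the projection P_{U_ad} : L^q(Ω)^N → L²(Ω)^N defined componentwise by (P_{U_ad}(u))^ν := max(a^ν, min(u^ν, b^ν)) is Newton differentiable, with Newton derivative at w acting componentwise as multiplication by the indicator of {x : a^ν(x) < w^ν(x) < b^ν(x)}. -/
open MeasureTheory Filter Asymptotics Topology
open scoped ENNReal

noncomputable section

/-- `L^q(Ω)^N`. -/
abbrev UqSp {n : ℕ} (N : ℕ) (q : ℝ≥0∞) (Ω : Set (EuclideanSpace ℝ (Fin n))) :=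
  PiLp 2 fun _ : Fin N => Lp ℝ q (volume.restrict Ω)


set_option maxHeartbeats 1000000 in
private lemma projAbs {a b u v : ℝ} (hab : a ≤ b) :
    |max a (min (u + v) b) - max a (min u b) -
      (if a < u + v ∧ u + v < b then v else 0)| ≤ |v| := by
  simp only [min_def, max_def]
  split_ifs <;> rw [abs_le] <;> constructor <;>
    linarith [le_abs_self v, neg_abs_le v, abs_nonneg v]

set_option maxHeartbeats 4000000 in
private lemma projSupp {a b u v : ℝ} (hab : a ≤ b)
    (hX : max a (min (u + v) b) - max a (min u b) -
      (if a < u + v ∧ u + v < b then v else 0) ≠ 0) :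
    (u ≠ a ∧ |u - a| ≤ |v|) ∨ (u ≠ b ∧ |u - b| ≤ |v|) := by
  by_contra hc
  push_neg at hc
  obtain ⟨hca, hcb⟩ := hc
  apply hX
  have hva : u = a ∨ |v| < |u - a| := (eq_or_ne u a).imp_right hca
  have hvb : u = b ∨ |v| < |u - b| := (eq_or_ne u b).imp_right hcb
  have hite : ((if a < u + v ∧ u + v < b then v else 0) = v ∧ a < u + v ∧ u + v < b) ∨
      ((if a < u + v ∧ u + v < b then v else 0) = 0 ∧ (u + v ≤ a ∨ b ≤ u + v)) := by
    by_cases h : a < u + v ∧ u + v < b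
    · exact Or.inl ⟨if_pos h, h⟩
    · exact Or.inr ⟨if_neg h, (not_and_or.mp h).imp not_lt.mp not_lt.mp⟩
  rcases hite with ⟨he, hc1, hc2⟩ | ⟨he, hc1 | hc1⟩ <;> rw [he] <;>
    rcases abs_cases v with ⟨h3, h4⟩ | ⟨h3, h4⟩ <;>
    rcases hva with hva | hva <;> rcases hvb with hvb | hvb <;>
    rcases abs_cases (u - a) with ⟨h5, h6⟩ | ⟨h5, h6⟩ <;>
    rcases abs_cases (u - b) with ⟨h7, h8⟩ | ⟨h7, h8⟩ <;>
    simp only [min_def, max_def] <;> split_ifs <;> linarith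

variable {α : Type*} [MeasurableSpace α]

private lemma small_gap (μ : Measure α) [IsFiniteMeasure μ] {d : α → ℝ}
    (hd : Measurable d) {ε : ℝ≥0∞} (hε : 0 < ε) :
    ∃ δ : ℝ, 0 < δ ∧ μ {x | d x ≠ 0 ∧ |d x| < δ} < ε := by
  set s : ℕ → Set α := fun k => {x | d x ≠ 0 ∧ |d x| < 1 / (k + 1)} with hs
  have hmeas : ∀ k, MeasurableSet (s k) :=
    fun k => ((hd (measurableSet_singleton 0)).compl).inter
      (measurableSet_lt hd.abs measurable_const)
  have hanti : Antitone s := by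
    intro k l hkl x hx
    have hkl' : (k : ℝ) ≤ l := Nat.cast_le.mpr hkl
    exact ⟨hx.1, lt_of_lt_of_le hx.2
      (one_div_le_one_div_of_le (by positivity) (by linarith))⟩
  have hempty : ⋂ k, s k = ∅ := by
    ext x
    simp only [Set.mem_iInter, Set.mem_empty_iff_false, iff_false, not_forall]
    by_cases hx : d x = 0
    · exact ⟨0, fun h => h.1 hx⟩
    · obtain ⟨k, hk⟩ := exists_nat_one_div_lt (abs_pos.2 hx)
      exact ⟨k, fun h => absurd h.2 (not_lt.2 hk.le)⟩
  have htendsto := tendsto_measure_iInter_atTop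
    (fun k => (hmeas k).nullMeasurableSet) hanti ⟨0, measure_ne_top μ _⟩
  rw [hempty, measure_empty] at htendsto
  obtain ⟨k, hk⟩ := (htendsto.eventually_lt_const hε).exists
  exact ⟨1 / (k + 1), by positivity, hk⟩

private lemma key (μ : Measure α) [IsFiniteMeasure μ] {r : ℝ≥0∞} (hr2 : 2 < r) (hrtop : r ≠ ∞)
    {a b u : α → ℝ} (hameas : Measurable a) (hbmeas : Measurable b) (humeas : Measurable u)
    (hab : ∀ᵐ x ∂μ, a x ≤ b x) {ε : ℝ≥0∞} (hε : 0 < ε) :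
    ∃ δ : ℝ≥0∞, 0 < δ ∧ ∀ v : α → ℝ, Measurable v → eLpNorm v r μ ≤ δ →
      eLpNorm (fun x => max (a x) (min (u x + v x) (b x)) - max (a x) (min (u x) (b x)) -
        (if a x < u x + v x ∧ u x + v x < b x then v x else 0)) 2 μ
        ≤ ε * eLpNorm v r μ := by
  have h2top : (2 : ℝ≥0∞) ≠ ∞ := by norm_num
  have hrt2 : (2 : ℝ) < r.toReal := by
    rw [show (2 : ℝ) = (2 : ℝ≥0∞).toReal by norm_num]
    exact (ENNReal.toReal_lt_toReal h2top hrtop).mpr hr2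
  set rt : ℝ := r.toReal with hrt
  have hrtpos : (0 : ℝ) < rt := by linarith
  set θ : ℝ := 1 / 2 - 1 / rt with hθ
  have hθpos : 0 < θ := by
    have : 1 / rt < 1 / 2 := by
      apply one_div_lt_one_div_of_lt <;> linarith
    rw [hθ]; linarith
  set η : ℝ≥0∞ := (min ε 1) ^ (1 / θ) with hη
  have hmin1 : min ε 1 ≠ ∞ := ne_top_of_le_ne_top (by norm_num) (min_le_right _ _)
  have hηpos : 0 < η := ENNReal.rpow_pos (lt_min hε one_pos) hmin1
  have hηtop : η ≠ ∞ := by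
    rw [hη]
    exact ENNReal.rpow_ne_top_of_nonneg (by positivity) hmin1
  have hηθ : η ^ θ ≤ ε := by
    rw [hη, ← ENNReal.rpow_mul, one_div_mul_cancel hθpos.ne', ENNReal.rpow_one]
    exact min_le_left _ _
  have hη3 : (0 : ℝ≥0∞) < η / 3 := ENNReal.div_pos hηpos.ne' (by norm_num)
  obtain ⟨δa, hδa, hA⟩ := small_gap μ (humeas.sub hameas) hη3
  obtain ⟨δb, hδb, hB⟩ := small_gap μ (humeas.sub hbmeas) hη3
  set δ0 : ℝ := min δa δb with hδ0def
  have hδ0 : 0 < δ0 := lt_min hδa hδb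
  set e0 : ℝ≥0∞ := ENNReal.ofReal δ0 with he0def
  have he0 : e0 ≠ 0 := (ENNReal.ofReal_pos.mpr hδ0).ne'
  have he0top : e0 ≠ ∞ := ENNReal.ofReal_ne_top
  refine ⟨e0 * (η / 3) ^ (1 / rt), ?_, ?_⟩
  · have hη3top : η / 3 ≠ ∞ := by
      rw [ENNReal.div_eq_inv_mul]
      exact ENNReal.mul_ne_top (by norm_num) hηtop
    exact ENNReal.mul_pos he0 (ENNReal.rpow_pos hη3 hη3top).ne'
  intro v hv hvδ
  set A : Set α := {x | u x - a x ≠ 0 ∧ |u x - a x| < δ0} with hAdef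
  set B : Set α := {x | u x - b x ≠ 0 ∧ |u x - b x| < δ0} with hBdef
  set V : Set α := {x | e0 ≤ (‖v x‖₊ : ℝ≥0∞)} with hVdef
  have hAm : MeasurableSet A :=
    (((humeas.sub hameas) (measurableSet_singleton 0)).compl).inter
      (measurableSet_lt (humeas.sub hameas).abs measurable_const)
  have hBm : MeasurableSet B :=
    (((humeas.sub hbmeas) (measurableSet_singleton 0)).compl).inter
      (measurableSet_lt (humeas.sub hbmeas).abs measurable_const)
  have hVm : MeasurableSet V := by
    have : Measurable fun x => (‖v x‖₊ : ℝ≥0∞) := hv.nnnorm.coe_nnreal_ennreal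
    exact measurableSet_le measurable_const this
  set S : Set α := A ∪ B ∪ V with hSdef
  have hSm : MeasurableSet S := (hAm.union hBm).union hVm
  -- Chebyshev bound for V
  have hVbound : μ V ≤ η / 3 := by
    have hcheb := meas_ge_le_mul_pow_eLpNorm_enorm μ (by positivity) hrtop
      hv.aestronglyMeasurable he0 (fun h => absurd h he0top)
    refine hcheb.trans ?_
    have hpow : eLpNorm v r μ ^ rt ≤ (e0 * (η / 3) ^ (1 / rt)) ^ rt := by
      exact ENNReal.rpow_le_rpow hvδ hrtpos.le
    calc e0⁻¹ ^ rt * eLpNorm v r μ ^ rt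
        ≤ e0⁻¹ ^ rt * (e0 * (η / 3) ^ (1 / rt)) ^ rt := by gcongr
      _ = (e0⁻¹ * e0) ^ rt * ((η / 3) ^ (1 / rt)) ^ rt := by
          rw [ENNReal.mul_rpow_of_nonneg _ _ hrtpos.le,
            ENNReal.mul_rpow_of_nonneg _ _ hrtpos.le, mul_assoc]
      _ = η / 3 := by
          rw [ENNReal.inv_mul_cancel he0 he0top, ENNReal.one_rpow, one_mul,
            ← ENNReal.rpow_mul, one_div_mul_cancel hrtpos.ne', ENNReal.rpow_one]
  have hAbound : μ A ≤ η / 3 := by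
    refine le_trans (measure_mono ?_) hA.le
    intro x hx
    exact ⟨hx.1, lt_of_lt_of_le hx.2 (min_le_left _ _)⟩
  have hBbound : μ B ≤ η / 3 := by
    refine le_trans (measure_mono ?_) hB.le
    intro x hx
    exact ⟨hx.1, lt_of_lt_of_le hx.2 (min_le_right _ _)⟩
  have hμS : μ S ≤ η := by
    calc μ S ≤ μ (A ∪ B) + μ V := measure_union_le _ _
      _ ≤ μ A + μ B + μ V := by gcongr; exact measure_union_le _ _
      _ ≤ η / 3 + η / 3 + η / 3 := by gcongr
      _ = η := ENNReal.add_thirds η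
  -- pointwise bound
  have hptwise : ∀ᵐ x ∂μ, ‖max (a x) (min (u x + v x) (b x)) - max (a x) (min (u x) (b x)) -
      (if a x < u x + v x ∧ u x + v x < b x then v x else 0)‖ ≤ ‖S.indicator v x‖ := by
    filter_upwards [hab] with x hx
    by_cases h0 : max (a x) (min (u x + v x) (b x)) - max (a x) (min (u x) (b x)) -
        (if a x < u x + v x ∧ u x + v x < b x then v x else 0) = 0
    · rw [h0]; simp
    have hxS : x ∈ S := by
      rcases projSupp hx h0 with ⟨h1, h2⟩ | ⟨h1, h2⟩
      · rcases lt_or_ge (|v x|) δ0 with hvx | hvx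
        · exact Or.inl (Or.inl ⟨sub_ne_zero.mpr h1, lt_of_le_of_lt h2 hvx⟩)
        · refine Or.inr ?_
          rw [hVdef, Set.mem_setOf_eq, ← enorm_eq_nnnorm, ← ofReal_norm, Real.norm_eq_abs]
          exact ENNReal.ofReal_le_ofReal hvx
      · rcases lt_or_ge (|v x|) δ0 with hvx | hvx
        · exact Or.inl (Or.inr ⟨sub_ne_zero.mpr h1, lt_of_le_of_lt h2 hvx⟩)
        · refine Or.inr ?_
          rw [hVdef, Set.mem_setOf_eq, ← enorm_eq_nnnorm, ← ofReal_norm, Real.norm_eq_abs]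
          exact ENNReal.ofReal_le_ofReal hvx
    rw [Set.indicator_of_mem hxS, Real.norm_eq_abs, Real.norm_eq_abs]
    exact projAbs hx
  calc eLpNorm (fun x => max (a x) (min (u x + v x) (b x)) - max (a x) (min (u x) (b x)) -
        (if a x < u x + v x ∧ u x + v x < b x then v x else 0)) 2 μ
      ≤ eLpNorm (S.indicator v) 2 μ := eLpNorm_mono_ae hptwise
    _ = eLpNorm v 2 (μ.restrict S) := eLpNorm_indicator_eq_eLpNorm_restrict hSm
    _ ≤ eLpNorm v r (μ.restrict S) * (μ.restrict S) Set.univ ^ (1 / (2 : ℝ≥0∞).toReal - 1 / rt) :=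
        eLpNorm_le_eLpNorm_mul_rpow_measure_univ hr2.le
          (hv.aestronglyMeasurable.mono_measure Measure.restrict_le_self)
    _ ≤ eLpNorm v r μ * μ S ^ θ := by
        rw [Measure.restrict_apply_univ,
          show (1 / (2 : ℝ≥0∞).toReal - 1 / rt) = θ by rw [hθ]; norm_num]
        exact mul_le_mul' (eLpNorm_mono_measure _ Measure.restrict_le_self) le_rfl
    _ ≤ eLpNorm v r μ * η ^ θ :=
        mul_le_mul' le_rfl (ENNReal.rpow_le_rpow hμS hθpos.le)
    _ ≤ eLpNorm v r μ * ε := by gcongr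
    _ = ε * eLpNorm v r μ := mul_comm _ _

set_option maxHeartbeats 1000000 in
/-- On a bounded domain `Ω` and for `q > 2`, the componentwise projection
`(P_{U_ad}(u))^ν = max(a^ν, min(u^ν, b^ν)) : L^q(Ω)^N → L²(Ω)^N` onto the admissible set is
Newton differentiable, the Newton derivative at `w` acting componentwise as multiplication
by the indicator of `{a^ν < w^ν < b^ν}`. -/
theorem stmt10 {n N : ℕ} (Ω : Set (EuclideanSpace ℝ (Fin n)))
    (hΩbd : Bornology.IsBounded Ω)
    (q : ℝ≥0∞) [Fact (1 ≤ q)] (hq : 2 < q)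
    (a b : Fin N → L2Sp Ω)
    (hab : ∀ ν, ∀ᵐ x ∂(volume.restrict Ω), a ν x ≤ b ν x)
    -- `P` is the componentwise pointwise projection onto `U_ad`
    (P : UqSp N q Ω → USp N Ω)
    (hP : ∀ u ν, ⇑(P u ν) =ᵐ[volume.restrict Ω]
      fun x => max (a ν x) (min (u ν x) (b ν x)))
    -- `H w` acts componentwise as multiplication by the indicator of `{a^ν < w^ν < b^ν}`
    (H : UqSp N q Ω → (UqSp N q Ω →L[ℝ] USp N Ω))
    (hH : ∀ w v ν, ⇑(H w v ν) =ᵐ[volume.restrict Ω]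
      ({x | a ν x < w ν x ∧ w ν x < b ν x}).indicator ⇑(v ν)) :
    ∀ u : UqSp N q Ω,
      (fun v => P (u + v) - P u - H (u + v) v) =o[𝓝 0]
        fun v : UqSp N q Ω => v := by
  intro u
  haveI hfin : IsFiniteMeasure (volume.restrict Ω) :=
    ⟨by rw [Measure.restrict_apply_univ]; exact hΩbd.measure_lt_top⟩
  set r : ℝ≥0∞ := min q 3 with hrdef
  have hr2 : 2 < r := lt_min hq (by norm_num)
  have hrq : r ≤ q := min_le_left _ _
  have hrtop : r ≠ ∞ := ne_top_of_le_ne_top (by norm_num) (min_le_right q 3)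
  have hrtpos : 0 < r.toReal := by
    refine ENNReal.toReal_pos ?_ hrtop
    intro h0
    rw [h0] at hr2
    exact (not_lt.mpr zero_le) hr2
  set C : ℝ≥0∞ := (volume.restrict Ω) Set.univ ^ (1 / r.toReal - 1 / q.toReal) with hCdef
  have hexp : 0 ≤ 1 / r.toReal - 1 / q.toReal := by
    rcases eq_or_ne q ∞ with hq' | hq'
    · rw [hq']
      simp only [ENNReal.toReal_top, div_zero, sub_zero]
      positivity
    · have h1 : r.toReal ≤ q.toReal := ENNReal.toReal_mono hq' hrq
      have h2 := one_div_le_one_div_of_le hrtpos h1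
      linarith
  have hCtop : C ≠ ∞ := ENNReal.rpow_ne_top_of_nonneg hexp (measure_ne_top _ _)
  -- measurable representatives
  set a' : Fin N → EuclideanSpace ℝ (Fin n) → ℝ :=
    fun ν => ((Lp.aestronglyMeasurable (a ν)).aemeasurable).mk _ with ha'def
  have ha'm : ∀ ν, Measurable (a' ν) := fun ν => AEMeasurable.measurable_mk _
  have ha'e : ∀ ν, ⇑(a ν) =ᵐ[volume.restrict Ω] a' ν := fun ν => AEMeasurable.ae_eq_mk _
  set b' : Fin N → EuclideanSpace ℝ (Fin n) → ℝ :=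
    fun ν => ((Lp.aestronglyMeasurable (b ν)).aemeasurable).mk _ with hb'def
  have hb'm : ∀ ν, Measurable (b' ν) := fun ν => AEMeasurable.measurable_mk _
  have hb'e : ∀ ν, ⇑(b ν) =ᵐ[volume.restrict Ω] b' ν := fun ν => AEMeasurable.ae_eq_mk _
  set u' : Fin N → EuclideanSpace ℝ (Fin n) → ℝ :=
    fun ν => ((Lp.aestronglyMeasurable (u ν)).aemeasurable).mk _ with hu'def
  have hu'm : ∀ ν, Measurable (u' ν) := fun ν => AEMeasurable.measurable_mk _
  have hu'e : ∀ ν, ⇑(u ν) =ᵐ[volume.restrict Ω] u' ν := fun ν => AEMeasurable.ae_eq_mk _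
  have hab' : ∀ ν, ∀ᵐ x ∂(volume.restrict Ω), a' ν x ≤ b' ν x := by
    intro ν
    filter_upwards [hab ν, ha'e ν, hb'e ν] with x h1 h2 h3
    rw [← h2, ← h3]; exact h1
  rw [isLittleO_iff]
  intro c hc
  have hεE : (0 : ℝ≥0∞) < ENNReal.ofReal c / C :=
    ENNReal.div_pos (ENNReal.ofReal_pos.mpr hc).ne' hCtop
  choose δf hδfpos hδfbound using fun ν =>
    key (volume.restrict Ω) hr2 hrtop (ha'm ν) (hb'm ν) (hu'm ν) (hab' ν) hεE
  set δS : ℝ≥0∞ := Finset.univ.inf δf with hδSdef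
  have hδS : 0 < δS :=
    (Finset.lt_inf_iff (show (0 : ℝ≥0∞) < ⊤ by norm_num)).mpr fun ν _ => hδfpos ν
  set δE : ℝ≥0∞ := min 1 (δS / C) with hδEdef
  have hδE0 : δE ≠ 0 := (lt_min one_pos (ENNReal.div_pos hδS.ne' hCtop)).ne'
  have hδEtop : δE ≠ ∞ := ne_top_of_le_ne_top (by norm_num) (min_le_left _ _)
  have hδEpos : 0 < δE.toReal := ENNReal.toReal_pos hδE0 hδEtop
  rw [Metric.eventually_nhds_iff]
  refine ⟨δE.toReal, hδEpos, ?_⟩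
  intro v hvd
  rw [dist_zero_right] at hvd
  -- component norms
  have hvνnorm : ∀ ν, ‖v ν‖ ≤ ‖v‖ := by
    intro ν
    have h1 := PiLp.norm_eq_of_L2 v
    have h2 : ‖v ν‖ ^ 2 ≤ ∑ i, ‖v i‖ ^ 2 :=
      Finset.single_le_sum (f := fun i => ‖v i‖ ^ 2) (fun i _ => sq_nonneg _)
        (Finset.mem_univ ν)
    calc ‖v ν‖ = Real.sqrt (‖v ν‖ ^ 2) := (Real.sqrt_sq (norm_nonneg _)).symm
      _ ≤ Real.sqrt (∑ i, ‖v i‖ ^ 2) := Real.sqrt_le_sqrt h2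
      _ = ‖v‖ := h1.symm
  have hvq : ∀ ν, eLpNorm ⇑(v ν) q (volume.restrict Ω) = ENNReal.ofReal ‖v ν‖ := by
    intro ν
    rw [Lp.norm_def, ENNReal.ofReal_toReal (Lp.eLpNorm_ne_top _)]
  set v' : Fin N → EuclideanSpace ℝ (Fin n) → ℝ :=
    fun ν => ((Lp.aestronglyMeasurable (v ν)).aemeasurable).mk _ with hv'def
  have hv'm : ∀ ν, Measurable (v' ν) := fun ν => AEMeasurable.measurable_mk _
  have hv'e : ∀ ν, ⇑(v ν) =ᵐ[volume.restrict Ω] v' ν := fun ν => AEMeasurable.ae_eq_mk _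
  have hv'rq : ∀ ν, eLpNorm (v' ν) r (volume.restrict Ω) ≤ ENNReal.ofReal ‖v ν‖ * C := by
    intro ν
    calc eLpNorm (v' ν) r (volume.restrict Ω)
        = eLpNorm ⇑(v ν) r (volume.restrict Ω) := (eLpNorm_congr_ae (hv'e ν)).symm
      _ ≤ eLpNorm ⇑(v ν) q (volume.restrict Ω) * C :=
          eLpNorm_le_eLpNorm_mul_rpow_measure_univ hrq (Lp.aestronglyMeasurable _)
      _ = ENNReal.ofReal ‖v ν‖ * C := by rw [hvq]
  have hv'r : ∀ ν, eLpNorm (v' ν) r (volume.restrict Ω) ≤ δS := by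
    intro ν
    refine (hv'rq ν).trans ?_
    calc ENNReal.ofReal ‖v ν‖ * C ≤ ENNReal.ofReal δE.toReal * C :=
          mul_le_mul' (ENNReal.ofReal_le_ofReal ((hvνnorm ν).trans hvd.le)) le_rfl
      _ = δE * C := by rw [ENNReal.ofReal_toReal hδEtop]
      _ ≤ (δS / C) * C := by gcongr; exact min_le_right _ _
      _ ≤ δS := by rw [mul_comm]; exact ENNReal.mul_div_le
  -- identify each component remainder
  have hcomp : ∀ ν, eLpNorm (⇑((P (u + v) - P u - H (u + v) v) ν)) 2 (volume.restrict Ω)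
      ≤ ENNReal.ofReal (c * ‖v ν‖) := by
    intro ν
    have hkeyb := hδfbound ν (v' ν) (hv'm ν)
      ((hv'r ν).trans (Finset.inf_le (Finset.mem_univ ν)))
    have hae : ⇑((P (u + v) - P u - H (u + v) v) ν) =ᵐ[volume.restrict Ω]
        fun x => max (a' ν x) (min (u' ν x + v' ν x) (b' ν x)) -
          max (a' ν x) (min (u' ν x) (b' ν x)) -
          (if a' ν x < u' ν x + v' ν x ∧ u' ν x + v' ν x < b' ν x then v' ν x else 0) := by
      have e1 : ((P (u + v) - P u - H (u + v) v) ν : L2Sp Ω)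
          = P (u + v) ν - P u ν - H (u + v) v ν := rfl
      have e2 : ((u + v : UqSp N q Ω) ν : Lp ℝ q (volume.restrict Ω)) = u ν + v ν := rfl
      rw [e1]
      filter_upwards [Lp.coeFn_sub (P (u + v) ν - P u ν) (H (u + v) v ν),
        Lp.coeFn_sub (P (u + v) ν) (P u ν), hP (u + v) ν, hP u ν, hH (u + v) v ν,
        Lp.coeFn_add (u ν) (v ν), ha'e ν, hb'e ν, hu'e ν, hv'e ν] with x h1 h2 h3 h4 h5 h6
        h7 h8 h9 h10
      rw [h1, Pi.sub_apply, h2, Pi.sub_apply, h3, h4, h5]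
      simp only [e2]
      rw [Pi.add_apply] at h6
      simp only [Set.indicator_apply, Set.mem_setOf_eq, h6, h7, h8, h9, h10]
    calc eLpNorm (⇑((P (u + v) - P u - H (u + v) v) ν)) 2 (volume.restrict Ω)
        = eLpNorm (fun x => max (a' ν x) (min (u' ν x + v' ν x) (b' ν x)) -
            max (a' ν x) (min (u' ν x) (b' ν x)) -
            (if a' ν x < u' ν x + v' ν x ∧ u' ν x + v' ν x < b' ν x then v' ν x else 0)) 2
            (volume.restrict Ω) := eLpNorm_congr_ae hae
      _ ≤ (ENNReal.ofReal c / C) * eLpNorm (v' ν) r (volume.restrict Ω) := hkeyb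
      _ ≤ (ENNReal.ofReal c / C) * (ENNReal.ofReal ‖v ν‖ * C) := by gcongr; exact hv'rq ν
      _ = ((ENNReal.ofReal c / C) * C) * ENNReal.ofReal ‖v ν‖ := by ring
      _ ≤ ENNReal.ofReal c * ENNReal.ofReal ‖v ν‖ := by
          gcongr
          rw [mul_comm]
          exact ENNReal.mul_div_le
      _ = ENNReal.ofReal (c * ‖v ν‖) := (ENNReal.ofReal_mul hc.le).symm
  have hRν : ∀ ν, ‖(P (u + v) - P u - H (u + v) v) ν‖ ≤ c * ‖v ν‖ := by
    intro ν
    rw [Lp.norm_def]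
    calc (eLpNorm (⇑((P (u + v) - P u - H (u + v) v) ν)) 2 (volume.restrict Ω)).toReal
        ≤ (ENNReal.ofReal (c * ‖v ν‖)).toReal :=
          ENNReal.toReal_mono ENNReal.ofReal_ne_top (hcomp ν)
      _ ≤ c * ‖v ν‖ := by
          rw [ENNReal.toReal_ofReal (by positivity)]
  calc ‖P (u + v) - P u - H (u + v) v‖
      = Real.sqrt (∑ ν, ‖(P (u + v) - P u - H (u + v) v) ν‖ ^ 2) := PiLp.norm_eq_of_L2 _
    _ ≤ Real.sqrt (∑ ν, (c * ‖v ν‖) ^ 2) := Real.sqrt_le_sqrt (Finset.sum_le_sum fun ν _ =>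
        pow_le_pow_left₀ (norm_nonneg _) (hRν ν) 2)
    _ = Real.sqrt (c ^ 2 * ∑ ν, ‖v ν‖ ^ 2) := by
        rw [Finset.mul_sum]
        simp_rw [mul_pow]
    _ = c * Real.sqrt (∑ ν, ‖v ν‖ ^ 2) := by
        rw [Real.sqrt_mul (sq_nonneg c), Real.sqrt_sq hc.le]
    _ = c * ‖v‖ := by rw [← PiLp.norm_eq_of_L2]
end
end

section
/- Let q > 2, let A : L²(Ω)^N → L^q(Ω) and B : L²(Ω) → L^q(Ω) be bounded linear operators, μ, ψ ∈ L²(Ω), ρ > 0. Then the map G : L²(Ω)^N → L^q(Ω), G(u) := B((μ + ρ(Au − ψ))₊), is Lipschitz continuous and Newton differentiable with Newton derivative at w given by h ↦ ρ B(χ_{Y(w)} · A h), where Y(w) := {x ∈ Ω : (μ + ρ(Aw − ψ))(x) > 0} and χ_{Y(w)} denotes multiplication by its indicator function; that is, for every u, ‖G(u+v) − G(u) − ρ B(χ_{Y(u+v)} A v)‖_{L^q(Ω)} = o(‖v‖_{L²(Ω)^N}) as ‖v‖ → 0. -/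
open MeasureTheory Filter Asymptotics Topology
open scoped ENNReal NNReal

noncomputable section

section NewtonAux

variable {α : Type*} [MeasurableSpace α]

lemma key_real (ρ a d : ℝ) (hρ : 0 < ρ) :
    |max (a + ρ * d) 0 - max a 0 - ρ * (if 0 < a + ρ * d then d else 0)| ≤
      (if a ≠ 0 ∧ |a| ≤ ρ * |d| then ρ * |d| else 0) := by
  have hd1 : ρ * d ≤ ρ * |d| := by nlinarith [le_abs_self d]
  have hd2 : ρ * (-d) ≤ ρ * |d| := by nlinarith [neg_abs_le d]
  by_cases hs : 0 < a + ρ * d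
  · rw [if_pos hs, max_eq_left hs.le]
    rcases le_or_gt a 0 with ha | ha
    · rcases eq_or_ne a 0 with rfl | ha0
      · simp only [max_self, ne_eq, not_true_eq_false, false_and, if_false]
        simp
      · rw [max_eq_right ha, if_pos ⟨ha0, by rw [abs_of_nonpos ha]; nlinarith⟩,
          abs_of_nonpos (by nlinarith)]
        nlinarith
    · rw [max_eq_left ha.le]
      have : a + ρ * d - a - ρ * d = 0 := by ring
      rw [this, abs_zero]
      split_ifs <;> positivity
  · push_neg at hs
    rw [if_neg (not_lt.mpr hs), max_eq_right hs]
    rcases lt_or_ge 0 a with ha | ha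
    · rw [max_eq_left ha.le, if_pos ⟨ha.ne', by rw [abs_of_pos ha]; nlinarith⟩,
        abs_of_nonpos (by nlinarith)]
      nlinarith
    · rw [max_eq_right ha]
      simp only [mul_zero, sub_zero, zero_sub, neg_zero, abs_zero]
      split_ifs <;> positivity

lemma aux_theta_pos {q : ℝ≥0∞} (hq : 2 < q) : 0 < 1 / (2:ℝ≥0∞).toReal - 1 / q.toReal := by
  have : (1:ℝ)/q.toReal < 1/2 := by
    by_cases hqt : q = ∞
    · simp [hqt]
    · have h2 : (2:ℝ) < q.toReal := by
        simpa using (ENNReal.toReal_lt_toReal (by norm_num) hqt).2 hq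
      apply one_div_lt_one_div_of_lt <;> norm_num [h2]
  simp only [ENNReal.toReal_ofNat]
  linarith

lemma aux_est {μ : Measure α} (q : ℝ≥0∞) (hq : 2 < q) (f : α → ℝ)
    (hf : AEStronglyMeasurable f μ) (S : Set α) (hS : MeasurableSet S) :
    eLpNorm (S.indicator f) 2 μ ≤
      eLpNorm f q μ * μ S ^ (1 / (2:ℝ≥0∞).toReal - 1 / q.toReal) := by
  rw [eLpNorm_indicator_eq_eLpNorm_restrict hS]
  calc eLpNorm f 2 (μ.restrict S)
      ≤ eLpNorm f q (μ.restrict S) *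
        (μ.restrict S) Set.univ ^ (1 / (2:ℝ≥0∞).toReal - 1 / q.toReal) :=
        eLpNorm_le_eLpNorm_mul_rpow_measure_univ hq.le hf.restrict
    _ ≤ _ := by
        rw [Measure.restrict_apply_univ]
        exact mul_le_mul_left (eLpNorm_mono_measure f Measure.restrict_le_self) _

lemma aux_norm_le {μ : Measure α} [IsFiniteMeasure μ] (q : ℝ≥0∞) [Fact (1 ≤ q)] (hq : 2 < q)
    (ρ : ℝ) (hρ : 0 < ρ) (w : Lp ℝ 2 μ) (z : Lp ℝ q μ) (S : Set α) (hS : MeasurableSet S)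
    (hb : ∀ᵐ x ∂μ, ‖w x‖ ≤ S.indicator (fun x => ρ * |z x|) x) :
    ‖w‖ ≤ ρ * ‖z‖ * (μ S ^ (1 / (2:ℝ≥0∞).toReal - 1 / q.toReal)).toReal := by
  set θ := 1 / (2:ℝ≥0∞).toReal - 1 / q.toReal with hθdef
  have hθ0 : (0:ℝ) ≤ θ := (aux_theta_pos hq).le
  have h1 : eLpNorm (⇑w) 2 μ ≤ eLpNorm (S.indicator fun x => ρ * |z x|) 2 μ :=
    eLpNorm_mono_ae_real hb
  have h2 : eLpNorm (S.indicator fun x => ρ * |z x|) 2 μ ≤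
      eLpNorm (fun x => ρ * |z x|) q μ * μ S ^ θ :=
    aux_est q hq _ (((Lp.stronglyMeasurable z).measurable.abs.const_mul ρ).aestronglyMeasurable)
      S hS
  have h3 : eLpNorm (fun x => ρ * |z x|) q μ = ENNReal.ofReal ρ * eLpNorm (⇑z) q μ := by
    have hfun : (fun x => ρ * |z x|) = ρ • (fun x => ‖z x‖) := by
      funext x; simp [Real.norm_eq_abs]
    rw [hfun, eLpNorm_const_smul, eLpNorm_norm]
    congr 1
    exact (Real.enorm_eq_ofReal hρ.le)
  have hfin : ENNReal.ofReal ρ * eLpNorm (⇑z) q μ * μ S ^ θ ≠ ∞ := by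
    apply ENNReal.mul_ne_top (ENNReal.mul_ne_top ENNReal.ofReal_ne_top (Lp.eLpNorm_ne_top z))
    exact ENNReal.rpow_ne_top_of_nonneg hθ0 (measure_ne_top μ S)
  have := ENNReal.toReal_mono hfin (h1.trans (h2.trans_eq (by rw [h3])))
  rw [Lp.norm_def, Lp.norm_def]
  calc (eLpNorm (⇑w) 2 μ).toReal ≤ _ := this
    _ = ρ * (eLpNorm (⇑z) q μ).toReal * (μ S ^ θ).toReal := by
        rw [ENNReal.toReal_mul, ENNReal.toReal_mul, ENNReal.toReal_ofReal hρ.le]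

end NewtonAux

set_option maxHeartbeats 2000000 in
/-- On a bounded domain `Ω`, for `q > 2`, bounded linear operators
`A : L²(Ω)^N → L^q(Ω)` and `B : L²(Ω) → L^q(Ω)`, `μ, ψ ∈ L²(Ω)` and `ρ > 0`, the map
`G(u) = B((μ + ρ(Au − ψ))₊)` is Lipschitz continuous and Newton differentiable with Newton
derivative `h ↦ ρ B(χ_{Y(w)} A h)` at `w`, where `Y(w) = {μ + ρ(Aw − ψ) > 0}`. -/
theorem stmt11 {n N : ℕ} (Ω : Set (EuclideanSpace ℝ (Fin n)))
    (hΩbd : Bornology.IsBounded Ω)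
    (q : ℝ≥0∞) [Fact (1 ≤ q)] (hq : 2 < q)
    (A : USp N Ω →L[ℝ] Lp ℝ q (volume.restrict Ω))
    (B : L2Sp Ω →L[ℝ] Lp ℝ q (volume.restrict Ω))
    (m ψ : L2Sp Ω) (ρ : ℝ) (hρ : 0 < ρ)
    -- `Pos u` is the positive part `(μ + ρ(Au − ψ))₊ ∈ L²(Ω)`
    (Pos : USp N Ω → L2Sp Ω)
    (hPos : ∀ u, ⇑(Pos u) =ᵐ[volume.restrict Ω]
      fun x => max (m x + ρ * ((A u) x - ψ x)) 0)
    (G : USp N Ω → Lp ℝ q (volume.restrict Ω))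
    (hG : ∀ u, G u = B (Pos u))
    -- `T w` is the map `v ↦ χ_{Y(w)} (A v) ∈ L²(Ω)`, where `Y(w) = {μ + ρ(Aw − ψ) > 0}`
    (T : USp N Ω → (USp N Ω →L[ℝ] L2Sp Ω))
    (hT : ∀ w v, ⇑(T w v) =ᵐ[volume.restrict Ω]
      ({x : EuclideanSpace ℝ (Fin n) | 0 < m x + ρ * ((A w) x - ψ x)}).indicator ⇑(A v)) :
    (∃ K : ℝ≥0, LipschitzWith K G) ∧
      ∀ u : USp N Ω,
        (fun v => G (u + v) - G u - ρ • B (T (u + v) v)) =o[𝓝 0]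
          fun v : USp N Ω => v := by
  classical
  haveI hfin : IsFiniteMeasure (volume.restrict Ω) :=
    ⟨by rw [Measure.restrict_apply_univ]; exact hΩbd.measure_lt_top⟩
  set θ := 1 / (2:ℝ≥0∞).toReal - 1 / q.toReal with hθdef
  have hθ : 0 < θ := aux_theta_pos hq
  set C : ℝ := ((volume.restrict Ω) Set.univ ^ θ).toReal with hCdef
  have hC0 : 0 ≤ C := ENNReal.toReal_nonneg
  constructor
  · -- Lipschitz continuity
    refine ⟨(‖B‖ * (ρ * ‖A‖ * C)).toNNReal, LipschitzWith.of_dist_le_mul fun u u' => ?_⟩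
    rw [dist_eq_norm, dist_eq_norm, Real.coe_toNNReal _ (by positivity)]
    have hAsub : ⇑(A (u - u')) =ᵐ[volume.restrict Ω] ⇑(A u) - ⇑(A u') := by
      rw [map_sub]; exact Lp.coeFn_sub _ _
    have hb : ∀ᵐ x ∂(volume.restrict Ω), ‖(Pos u - Pos u') x‖ ≤
        Set.univ.indicator (fun x => ρ * |(A (u - u')) x|) x := by
      filter_upwards [hPos u, hPos u', Lp.coeFn_sub (Pos u) (Pos u'), hAsub] with x h1 h2 h3 h4
      have hax : (A (u - u')) x = (A u) x - (A u') x := by rw [h4]; rfl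
      rw [Set.indicator_univ, h3, Pi.sub_apply, h1, h2, Real.norm_eq_abs]
      calc |max (m x + ρ * ((A u) x - ψ x)) 0 - max (m x + ρ * ((A u') x - ψ x)) 0|
          ≤ |(m x + ρ * ((A u) x - ψ x)) - (m x + ρ * ((A u') x - ψ x))| :=
            abs_max_sub_max_le_abs _ _ _
        _ = ρ * |(A (u - u')) x| := by
            rw [hax, show (m x + ρ * ((A u) x - ψ x)) - (m x + ρ * ((A u') x - ψ x))
              = ρ * ((A u) x - (A u') x) from by ring, abs_mul, abs_of_pos hρ]
    have hw := aux_norm_le q hq ρ hρ (Pos u - Pos u') (A (u - u')) Set.univ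
      MeasurableSet.univ hb
    calc ‖G u - G u'‖ = ‖B (Pos u - Pos u')‖ := by rw [hG, hG, ← map_sub]
      _ ≤ ‖B‖ * ‖Pos u - Pos u'‖ := B.le_opNorm _
      _ ≤ ‖B‖ * (ρ * ‖A (u - u')‖ * C) := by
          apply mul_le_mul_of_nonneg_left _ (norm_nonneg B)
          exact hw
      _ ≤ ‖B‖ * (ρ * (‖A‖ * ‖u - u'‖) * C) := by
          apply mul_le_mul_of_nonneg_left _ (norm_nonneg B)
          apply mul_le_mul_of_nonneg_right _ hC0
          exact mul_le_mul_of_nonneg_left (A.le_opNorm _) hρ.le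
      _ = ‖B‖ * (ρ * ‖A‖ * C) * ‖u - u'‖ := by ring
  · -- Newton differentiability
    intro u
    set a : EuclideanSpace ℝ (Fin n) → ℝ := fun x => m x + ρ * ((A u) x - ψ x) with hadef
    have ham : Measurable a := by
      apply Measurable.add (Lp.stronglyMeasurable m).measurable
      exact (((Lp.stronglyMeasurable (A u)).measurable.sub
        (Lp.stronglyMeasurable ψ).measurable)).const_mul ρ
    have hane : MeasurableSet {x | a x ≠ 0} := (ham (measurableSet_singleton 0)).compl
    have hSmeas : ∀ v : USp N Ω,
        MeasurableSet {x | a x ≠ 0 ∧ |a x| ≤ ρ * |(A v) x|} := by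
      intro v
      exact hane.inter (measurableSet_le ham.abs
        ((Lp.stronglyMeasurable (A v)).measurable.abs.const_mul ρ))
    -- pointwise bound
    have hbound : ∀ v : USp N Ω, ∀ᵐ x ∂(volume.restrict Ω),
        ‖(Pos (u + v) - Pos u - ρ • T (u + v) v) x‖ ≤
          ({x | a x ≠ 0 ∧ |a x| ≤ ρ * |(A v) x|}).indicator
            (fun x => ρ * |(A v) x|) x := by
      intro v
      have hAadd : ⇑(A (u + v)) =ᵐ[volume.restrict Ω] ⇑(A u) + ⇑(A v) := by
        rw [map_add]; exact Lp.coeFn_add _ _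
      filter_upwards [hPos (u + v), hPos u, hT (u + v) v, hAadd,
        Lp.coeFn_sub (Pos (u + v) - Pos u) (ρ • T (u + v) v),
        Lp.coeFn_sub (Pos (u + v)) (Pos u),
        Lp.coeFn_smul ρ (T (u + v) v)] with x h1 h2 h3 h4 h5 h6 h7
      have hax : (A (u + v)) x = (A u) x + (A v) x := by rw [h4]; rfl
      rw [h5, Pi.sub_apply, h6, Pi.sub_apply, h7, Pi.smul_apply, smul_eq_mul, h1, h2, h3,
        Real.norm_eq_abs, Set.indicator_apply, Set.indicator_apply]
      simp only [Set.mem_setOf_eq, hax]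
      have hval : m x + ρ * ((A u) x + (A v) x - ψ x) = a x + ρ * (A v) x := by
        rw [hadef]; ring
      rw [hval]
      exact key_real ρ (a x) ((A v) x) hρ
    -- norm bound
    have hRle : ∀ v : USp N Ω, ‖G (u + v) - G u - ρ • B (T (u + v) v)‖ ≤
        ‖B‖ * (ρ * (‖A‖ * ‖v‖) *
          ((volume.restrict Ω) {x | a x ≠ 0 ∧ |a x| ≤ ρ * |(A v) x|} ^ θ).toReal) := by
      intro v
      have hw := aux_norm_le q hq ρ hρ (Pos (u + v) - Pos u - ρ • T (u + v) v) (A v)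
        _ (hSmeas v) (hbound v)
      have heq : G (u + v) - G u - ρ • B (T (u + v) v)
          = B (Pos (u + v) - Pos u - ρ • T (u + v) v) := by
        rw [hG, hG, map_sub, map_sub, B.map_smul]
      rw [heq]
      calc ‖B (Pos (u + v) - Pos u - ρ • T (u + v) v)‖
          ≤ ‖B‖ * ‖Pos (u + v) - Pos u - ρ • T (u + v) v‖ := B.le_opNorm _
        _ ≤ ‖B‖ * (ρ * (‖A‖ * ‖v‖) *
            ((volume.restrict Ω) {x | a x ≠ 0 ∧ |a x| ≤ ρ * |(A v) x|} ^ θ).toReal) := by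
            apply mul_le_mul_of_nonneg_left _ (norm_nonneg B)
            refine hw.trans ?_
            apply mul_le_mul_of_nonneg_right _ ENNReal.toReal_nonneg
            exact mul_le_mul_of_nonneg_left (A.le_opNorm v) hρ.le
    -- the measure of the critical set tends to zero
    have hμto : Tendsto
        (fun v : USp N Ω => (volume.restrict Ω) {x | a x ≠ 0 ∧ |a x| ≤ ρ * |(A v) x|})
        (𝓝 0) (𝓝 0) := by
      rw [ENNReal.tendsto_nhds_zero]
      intro ε hε
      have hε2 : (0:ℝ≥0∞) < ε / 2 := ENNReal.half_pos hε.ne'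
      -- choose the level t via continuity from above
      obtain ⟨k, hk⟩ : ∃ k : ℕ,
          (volume.restrict Ω) {x | a x ≠ 0 ∧ |a x| ≤ 1 / ((k:ℝ) + 1)} < ε / 2 := by
        set E : ℕ → Set (EuclideanSpace ℝ (Fin n)) :=
          fun k => {x | a x ≠ 0 ∧ |a x| ≤ 1 / ((k:ℝ) + 1)} with hEdef
        have hEmeas : ∀ k, NullMeasurableSet (E k) (volume.restrict Ω) := fun k =>
          (hane.inter (measurableSet_le ham.abs measurable_const)).nullMeasurableSet
        have hEanti : Antitone E := by
          intro k l hkl x hx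
          refine ⟨hx.1, hx.2.trans ?_⟩
          apply one_div_le_one_div_of_le
          · positivity
          · have : (k:ℝ) ≤ l := Nat.cast_le.mpr hkl
            linarith
        have hEempty : ⋂ k, E k = ∅ := by
          ext x
          simp only [Set.mem_iInter, Set.mem_empty_iff_false, iff_false, not_forall]
          by_cases hx : a x = 0
          · exact ⟨0, fun h => h.1 hx⟩
          · obtain ⟨k, hk⟩ := exists_nat_one_div_lt (abs_pos.mpr hx)
            exact ⟨k, fun h => absurd h.2 (not_le.mpr hk)⟩
        have htend := tendsto_measure_iInter_atTop hEmeas hEanti ⟨0, measure_ne_top _ _⟩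
        rw [hEempty, measure_empty] at htend
        exact (htend.eventually (gt_mem_nhds hε2)).exists
      set t : ℝ := 1 / ((k:ℝ) + 1) with htdef
      have ht : 0 < t := by positivity
      have htρ : (0:ℝ≥0∞) < ENNReal.ofReal (t / ρ) := ENNReal.ofReal_pos.mpr (div_pos ht hρ)
      set K : ℝ≥0∞ := (ENNReal.ofReal (t / ρ))⁻¹ ^ (2:ℝ) *
        ((volume.restrict Ω) Set.univ ^ θ * ENNReal.ofReal ‖A‖) ^ (2:ℝ) with hKdef
      have hKtop : K ≠ ∞ := by
        apply ENNReal.mul_ne_top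
        · exact ENNReal.rpow_ne_top_of_nonneg (by norm_num) (ENNReal.inv_ne_top.mpr htρ.ne')
        · apply ENNReal.rpow_ne_top_of_nonneg (by norm_num)
          exact ENNReal.mul_ne_top (ENNReal.rpow_ne_top_of_nonneg hθ.le (measure_ne_top _ _))
            ENNReal.ofReal_ne_top
      -- Chebyshev inequality
      have hcheb : ∀ v : USp N Ω,
          (volume.restrict Ω) {x | ENNReal.ofReal (t / ρ) ≤ (‖(A v) x‖₊ : ℝ≥0∞)} ≤
            K * ENNReal.ofReal ‖v‖ ^ (2:ℝ) := by
        intro v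
        have h1 := meas_ge_le_mul_pow_eLpNorm_enorm (volume.restrict Ω) (p := 2) two_ne_zero
          ENNReal.ofNat_ne_top (Lp.aestronglyMeasurable (A v)) htρ.ne'
          (fun h => absurd h ENNReal.ofReal_ne_top)
        have hAvq : eLpNorm (⇑(A v)) q (volume.restrict Ω) = ENNReal.ofReal ‖A v‖ :=
          ((ofReal_norm (A v)).trans (Lp.enorm_def (A v))).symm
        have h2 : eLpNorm (⇑(A v)) 2 (volume.restrict Ω) ≤
            (volume.restrict Ω) Set.univ ^ θ * ENNReal.ofReal ‖A‖ * ENNReal.ofReal ‖v‖ := by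
          have h3 := aux_est q hq (⇑(A v)) (Lp.aestronglyMeasurable (A v)) Set.univ
            MeasurableSet.univ
          rw [Set.indicator_univ, ← hθdef] at h3
          calc eLpNorm (⇑(A v)) 2 (volume.restrict Ω)
              ≤ eLpNorm (⇑(A v)) q (volume.restrict Ω) *
                  (volume.restrict Ω) Set.univ ^ θ := h3
            _ ≤ (ENNReal.ofReal ‖A‖ * ENNReal.ofReal ‖v‖) *
                  (volume.restrict Ω) Set.univ ^ θ := by
                apply mul_le_mul_left
                rw [hAvq, ← ENNReal.ofReal_mul (norm_nonneg A)]
                exact ENNReal.ofReal_le_ofReal (A.le_opNorm v)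
            _ = (volume.restrict Ω) Set.univ ^ θ * ENNReal.ofReal ‖A‖ *
                  ENNReal.ofReal ‖v‖ := by ring
        simp only [ENNReal.toReal_ofNat] at h1
        refine h1.trans ?_
        have h5 : eLpNorm (⇑(A v)) 2 (volume.restrict Ω) ^ (2:ℝ) ≤
            ((volume.restrict Ω) Set.univ ^ θ * ENNReal.ofReal ‖A‖) ^ (2:ℝ) *
              ENNReal.ofReal ‖v‖ ^ (2:ℝ) := by
          rw [← ENNReal.mul_rpow_of_nonneg _ _ (by norm_num : (0:ℝ) ≤ 2)]
          exact ENNReal.rpow_le_rpow h2 (by norm_num)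
        calc (ENNReal.ofReal (t / ρ))⁻¹ ^ (2:ℝ) *
              eLpNorm (⇑(A v)) 2 (volume.restrict Ω) ^ (2:ℝ)
            ≤ (ENNReal.ofReal (t / ρ))⁻¹ ^ (2:ℝ) *
              (((volume.restrict Ω) Set.univ ^ θ * ENNReal.ofReal ‖A‖) ^ (2:ℝ) *
                ENNReal.ofReal ‖v‖ ^ (2:ℝ)) := mul_le_mul_right h5 _
          _ = K * ENNReal.ofReal ‖v‖ ^ (2:ℝ) := by rw [hKdef, mul_assoc]
      -- inclusion of the critical set
      have hsub : ∀ v : USp N Ω, {x | a x ≠ 0 ∧ |a x| ≤ ρ * |(A v) x|} ⊆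
          {x | a x ≠ 0 ∧ |a x| ≤ t} ∪
            {x | ENNReal.ofReal (t / ρ) ≤ (‖(A v) x‖₊ : ℝ≥0∞)} := by
        intro v x hx
        rcases le_or_gt (|a x|) t with h | h
        · exact Or.inl ⟨hx.1, h⟩
        · refine Or.inr ?_
          have h6 : t / ρ ≤ |(A v) x| := by
            rw [div_le_iff₀ hρ]
            nlinarith [hx.2]
          simp only [Set.mem_setOf_eq]
          calc ENNReal.ofReal (t / ρ) ≤ ENNReal.ofReal (|(A v) x|) :=
              ENNReal.ofReal_le_ofReal h6
            _ = (‖(A v) x‖₊ : ℝ≥0∞) := by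
                rw [← Real.norm_eq_abs]; exact ofReal_norm _
      -- eventual smallness of the Chebyshev bound
      have hev : ∀ᶠ v : USp N Ω in 𝓝 0, K * ENNReal.ofReal ‖v‖ ^ (2:ℝ) ≤ ε / 2 := by
        by_cases hK0 : K = 0
        · filter_upwards with v
          simp [hK0]
        · have hmin0 : min (ε / 2) 1 ≠ 0 := by
            simp only [ne_eq, min_eq_iff]
            push_neg
            exact ⟨fun h => absurd h hε2.ne', fun h => absurd h one_ne_zero⟩
          have hminfin : min (ε / 2) 1 ≠ ∞ :=
            ne_top_of_le_ne_top ENNReal.one_ne_top (min_le_right _ _)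
          set c : ℝ≥0∞ := min (ε / 2) 1 / K with hcdef
          have hc0 : c ≠ 0 := (ENNReal.div_pos hmin0 hKtop).ne'
          have hcfin : c ≠ ∞ := (ENNReal.div_lt_top hminfin hK0).ne
          set r : ℝ := Real.sqrt c.toReal with hrdef
          have hr : 0 < r := Real.sqrt_pos.mpr (ENNReal.toReal_pos hc0 hcfin)
          filter_upwards [Metric.ball_mem_nhds (0 : USp N Ω) hr] with v hv
          rw [mem_ball_zero_iff] at hv
          have h7 : ENNReal.ofReal ‖v‖ ^ (2:ℝ) ≤ c := by
            calc ENNReal.ofReal ‖v‖ ^ (2:ℝ) ≤ ENNReal.ofReal r ^ (2:ℝ) :=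
                ENNReal.rpow_le_rpow (ENNReal.ofReal_le_ofReal hv.le) (by norm_num)
              _ = ENNReal.ofReal (r ^ (2:ℝ)) :=
                ENNReal.ofReal_rpow_of_nonneg hr.le (by norm_num)
              _ = ENNReal.ofReal c.toReal := by
                  rw [Real.rpow_two, hrdef, Real.sq_sqrt ENNReal.toReal_nonneg]
              _ = c := ENNReal.ofReal_toReal hcfin
          calc K * ENNReal.ofReal ‖v‖ ^ (2:ℝ) ≤ K * c := mul_le_mul_right h7 _
            _ ≤ min (ε / 2) 1 := ENNReal.mul_div_le
            _ ≤ ε / 2 := min_le_left _ _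
      filter_upwards [hev] with v hv
      calc (volume.restrict Ω) {x | a x ≠ 0 ∧ |a x| ≤ ρ * |(A v) x|}
          ≤ (volume.restrict Ω) ({x | a x ≠ 0 ∧ |a x| ≤ t} ∪
              {x | ENNReal.ofReal (t / ρ) ≤ (‖(A v) x‖₊ : ℝ≥0∞)}) :=
            measure_mono (hsub v)
        _ ≤ (volume.restrict Ω) {x | a x ≠ 0 ∧ |a x| ≤ t} +
              (volume.restrict Ω) {x | ENNReal.ofReal (t / ρ) ≤ (‖(A v) x‖₊ : ℝ≥0∞)} :=
            measure_union_le _ _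
        _ ≤ ε / 2 + ε / 2 := add_le_add hk.le ((hcheb v).trans hv)
        _ = ε := ENNReal.add_halves ε
    -- conclusion
    have hcv : Tendsto (fun v : USp N Ω =>
        ‖B‖ * (ρ * (‖A‖ *
          ((volume.restrict Ω) {x | a x ≠ 0 ∧ |a x| ≤ ρ * |(A v) x|} ^ θ).toReal)))
        (𝓝 0) (𝓝 0) := by
      have h1 : Tendsto (fun v : USp N Ω =>
          ((volume.restrict Ω) {x | a x ≠ 0 ∧ |a x| ≤ ρ * |(A v) x|} ^ θ).toReal)
          (𝓝 0) (𝓝 0) := by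
        have h2 : Tendsto (fun v : USp N Ω =>
            ((volume.restrict Ω) {x | a x ≠ 0 ∧ |a x| ≤ ρ * |(A v) x|}).toReal)
            (𝓝 0) (𝓝 0) := by
          have h2' := (ENNReal.tendsto_toReal (a := (0:ℝ≥0∞)) (by norm_num)).comp hμto
          rw [ENNReal.toReal_zero] at h2'
          exact h2'
        have h3 : Tendsto (fun y : ℝ => y ^ θ) (𝓝 0) (𝓝 0) := by
          have := (Real.continuousAt_rpow_const 0 θ (Or.inr hθ.le)).tendsto
          rwa [Real.zero_rpow hθ.ne'] at this
        have := h3.comp h2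
        refine this.congr fun v => ?_
        simp only [Function.comp_apply]
        rw [← ENNReal.toReal_rpow]
      have := (h1.const_mul (‖B‖ * (ρ * ‖A‖)))
      simp only [mul_zero] at this
      refine this.congr fun v => by ring
    rw [isLittleO_iff]
    intro c hc
    filter_upwards [hcv.eventually (gt_mem_nhds hc)] with v hv
    calc ‖G (u + v) - G u - ρ • B (T (u + v) v)‖
        ≤ ‖B‖ * (ρ * (‖A‖ * ‖v‖) *
          ((volume.restrict Ω) {x | a x ≠ 0 ∧ |a x| ≤ ρ * |(A v) x|} ^ θ).toReal) := hRle v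
      _ = (‖B‖ * (ρ * (‖A‖ *
          ((volume.restrict Ω) {x | a x ≠ 0 ∧ |a x| ≤ ρ * |(A v) x|} ^ θ).toReal))) * ‖v‖ := by
          ring
      _ ≤ c * ‖v‖ := mul_le_mul_of_nonneg_right hv.le (norm_nonneg v)
end
end

section
/- Let Ω have finite measure, q > 2, α > 0, and for ν = 1,…,N let u_a^ν, u_b^ν ∈ L²(Ω) with u_a^ν ≤ u_b^ν a.e. Let F̃ : U → L^q(Ω)^N be such that each component F̃^ν : U → L^q(Ω) is Newton differentiable with Newton derivative D_N F̃^ν (bounded near every point) and locally Lipschitz. Then G : U → U, G(u) := u − P_{U_ad}(−α^{−1} F̃(u)), is Newton differentiable with Newton derivative D_N G(u) = Id + α^{−1} χ_I(u) · D_N F̃(u), where (χ_I(u) · D_N F̃(u) h)^ν := χ_{I^ν(u)} · (D_N F̃^ν(u) h) and χ_{I^ν(u)} is multiplication by the indicator of the set I^ν(u) := {x : u_a^ν(x) < −α^{−1} F̃^ν(u)(x) < u_b^ν(x)}. -/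
open MeasureTheory Filter Asymptotics Topology
open scoped ENNReal NNReal

noncomputable section

noncomputable def deltaAux (a b r : ℝ) : ℝ :=
  if r < a then a - r else if b < r then r - b
  else if a < r ∧ r < b then min (r - a) (b - r) else b - a

lemma measurable_deltaAux {X : Type*} [MeasurableSpace X] {a b w : X → ℝ}
    (ha : Measurable a) (hb : Measurable b) (hw : Measurable w) :
    Measurable fun x => deltaAux (a x) (b x) (w x) := by
  unfold deltaAux
  exact Measurable.ite (measurableSet_lt hw ha) (ha.sub hw)
    (Measurable.ite (measurableSet_lt hb hw) (hw.sub hb)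
      (Measurable.ite ((measurableSet_lt ha hw).inter (measurableSet_lt hw hb))
        ((hw.sub ha).min (hb.sub hw)) (hb.sub ha)))

lemma pilp_apply_norm_le {ι : Type*} [Fintype ι] {E : ι → Type*}
    [∀ i, SeminormedAddCommGroup (E i)] (x : PiLp 2 E) (i : ι) : ‖x i‖ ≤ ‖x‖ := by
  rw [PiLp.norm_eq_of_L2]
  have h1 : ‖x i‖ ^ 2 ≤ ∑ j, ‖x j‖ ^ 2 :=
    Finset.single_le_sum (f := fun j => ‖x j‖ ^ 2) (fun j _ => by positivity) (Finset.mem_univ i)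
  calc ‖x i‖ = Real.sqrt (‖x i‖ ^ 2) := by rw [Real.sqrt_sq (norm_nonneg _)]
    _ ≤ _ := Real.sqrt_le_sqrt h1

lemma pilp_norm_le_sum {ι : Type*} [Fintype ι] {E : ι → Type*}
    [∀ i, SeminormedAddCommGroup (E i)] (x : PiLp 2 E) : ‖x‖ ≤ ∑ i, ‖x i‖ := by
  rw [PiLp.norm_eq_of_L2]
  calc Real.sqrt (∑ i, ‖x i‖ ^ 2) ≤ Real.sqrt ((∑ i, ‖x i‖) ^ 2) :=
        Real.sqrt_le_sqrt (Finset.sum_sq_le_sq_sum_of_nonneg fun i _ => norm_nonneg _)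
    _ = ∑ i, ‖x i‖ := Real.sqrt_sq (Finset.sum_nonneg fun i _ => norm_nonneg _)

lemma residual_key (a b r r' : ℝ) (hab : a ≤ b) :
    |max a (min r' b) - max a (min r b) - (if a < r' ∧ r' < b then r' - r else 0)| ≤ |r' - r| ∧
    (max a (min r' b) - max a (min r b) - (if a < r' ∧ r' < b then r' - r else 0) ≠ 0 →
      0 < deltaAux a b r ∧ deltaAux a b r ≤ |r' - r|) := by
  have habs1 : r' - r ≤ |r' - r| := le_abs_self _
  have habs2 : -(r' - r) ≤ |r' - r| := neg_le_of_neg_le (neg_abs_le _)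
  have habs0 : (0:ℝ) ≤ |r' - r| := abs_nonneg _
  by_cases hI : a < r' ∧ r' < b
  · obtain ⟨h1, h2⟩ := hI
    rw [if_pos ⟨h1, h2⟩, min_eq_left h2.le, max_eq_right h1.le]
    rcases lt_or_ge r a with hr | hr
    · rw [min_eq_left (hr.le.trans hab), max_eq_left hr.le]
      unfold deltaAux
      rw [if_pos hr]
      exact ⟨abs_le.mpr ⟨by linarith, by linarith⟩, fun _ => ⟨by linarith, by linarith⟩⟩
    · rcases lt_or_ge b r with hr2 | hr2
      · rw [min_eq_right hr2.le, max_eq_right hab]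
        unfold deltaAux
        rw [if_neg (by linarith), if_pos hr2]
        exact ⟨abs_le.mpr ⟨by linarith, by linarith⟩, fun _ => ⟨by linarith, by linarith⟩⟩
      · rw [min_eq_left hr2, max_eq_right hr]
        refine ⟨by simpa using habs0, fun hne => absurd (by ring) hne⟩
  · rw [if_neg hI, sub_zero]
    have hlip : |max a (min r' b) - max a (min r b)| ≤ |r' - r| := by
      calc |max a (min r' b) - max a (min r b)|
          ≤ |min r' b - min r b| := by
            rw [max_comm a (min r' b), max_comm a (min r b)]
            exact abs_max_sub_max_le_abs _ _ _
        _ ≤ |r' - r| := by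
            have : min r' b - min r b = -(max (-r') (-b) - max (-r) (-b)) := by
              rw [max_neg_neg, max_neg_neg]; ring
            rw [this, abs_neg]
            calc |max (-r') (-b) - max (-r) (-b)| ≤ |(-r') - (-r)| :=
                  abs_max_sub_max_le_abs _ _ _
              _ = |r' - r| := by rw [← abs_neg]; ring_nf
    refine ⟨hlip, fun hne => ?_⟩
    rcases not_and_or.mp hI with hr' | hr'
    · push_neg at hr'
      rw [min_eq_left (hr'.trans hab), max_eq_left hr'] at hne
      rcases le_or_gt r a with h | h
      · exact absurd (by rw [min_eq_left (h.trans hab), max_eq_left h]; ring) hne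
      · rcases le_or_gt b r with h2 | h2
        · rw [min_eq_right h2, max_eq_right hab] at hne
          have hab' : a < b := lt_of_le_of_ne hab (fun he => hne (by rw [he]; ring))
          unfold deltaAux
          rcases lt_or_eq_of_le h2 with h3 | h3
          · rw [if_neg (by linarith), if_pos h3]
            exact ⟨by linarith, by linarith⟩
          · rw [if_neg (by linarith), if_neg (by linarith), if_neg (by simp [← h3])]
            exact ⟨by linarith, by linarith⟩
        · rw [min_eq_left h2.le, max_eq_right h.le] at hne
          unfold deltaAux
          rw [if_neg (by linarith), if_neg (by linarith), if_pos ⟨h, h2⟩]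
          exact ⟨lt_min (by linarith) (by linarith), (min_le_left _ _).trans (by linarith)⟩
    · push_neg at hr'
      rw [min_eq_right hr', max_eq_right hab] at hne
      rcases le_or_gt b r with h | h
      · exact absurd (by rw [min_eq_right h, max_eq_right hab]; ring) hne
      · rcases le_or_gt r a with h2 | h2
        · rw [min_eq_left (h2.trans hab), max_eq_left h2] at hne
          have hab' : a < b := lt_of_le_of_ne hab (fun he => hne (by rw [he]; ring))
          unfold deltaAux
          rcases lt_or_eq_of_le h2 with h3 | h3
          · rw [if_pos h3]
            exact ⟨by linarith, by linarith⟩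
          · rw [if_neg (by linarith), if_neg (by linarith), if_neg (by simp [h3])]
            exact ⟨by linarith, by linarith⟩
        · rw [min_eq_left h.le, max_eq_right h2.le] at hne
          unfold deltaAux
          rw [if_neg (by linarith), if_neg (by linarith), if_pos ⟨h2, h⟩]
          exact ⟨lt_min (by linarith) (by linarith), (min_le_right _ _).trans (by linarith)⟩


/-- Core quantitative estimate: Newton-differentiability of the pointwise projection,
from `L^q` to `L²`, `q > 2`, on a finite measure space. -/
lemma proj_residual_bound {X : Type*} [MeasurableSpace X] {μ : Measure X} [IsFiniteMeasure μ]
    {q : ℝ≥0∞} [Fact (1 ≤ q)] (hq : 2 < q)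
    (aL bL : Lp ℝ 2 μ) (hab : ∀ᵐ x ∂μ, aL x ≤ bL x) (wL : Lp ℝ q μ)
    {c D : ℝ} (hc : 0 < c) (hD : 0 < D) :
    ∃ ε : ℝ, 0 < ε ∧ ∀ (w'L dL : Lp ℝ q μ) (RL : Lp ℝ 2 μ) (s : ℝ),
      0 ≤ s → s ≤ ε → ‖w'L - wL‖ ≤ D * s →
      (⇑RL =ᵐ[μ] fun x => max (aL x) (min (w'L x) (bL x)) - max (aL x) (min (wL x) (bL x))
          - (if aL x < w'L x ∧ w'L x < bL x then dL x else 0)) →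
      ‖RL‖ ≤ c * s +
        (μ Set.univ).toReal ^ (1 / (2 : ℝ≥0∞).toReal - 1 / q.toReal) * ‖w'L - wL - dL‖ := by
  -- measurable representatives
  set am := (Lp.aestronglyMeasurable aL).mk _ with ham_def
  have ham : Measurable am := (Lp.aestronglyMeasurable aL).stronglyMeasurable_mk.measurable
  have hama : ⇑aL =ᵐ[μ] am := (Lp.aestronglyMeasurable aL).ae_eq_mk
  set bm := (Lp.aestronglyMeasurable bL).mk _ with hbm_def
  have hbm : Measurable bm := (Lp.aestronglyMeasurable bL).stronglyMeasurable_mk.measurable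
  have hbma : ⇑bL =ᵐ[μ] bm := (Lp.aestronglyMeasurable bL).ae_eq_mk
  set wm := (Lp.aestronglyMeasurable wL).mk _ with hwm_def
  have hwm : Measurable wm := (Lp.aestronglyMeasurable wL).stronglyMeasurable_mk.measurable
  have hwma : ⇑wL =ᵐ[μ] wm := (Lp.aestronglyMeasurable wL).ae_eq_mk
  set δm : X → ℝ := fun x => deltaAux (am x) (bm x) (wm x) with hδm_def
  have hδm : Measurable δm := measurable_deltaAux ham hbm hwm
  set Aset : ℝ → Set X := fun ε => {x | 0 < δm x ∧ δm x ≤ ε} with hAset_def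
  have hAm : ∀ ε, MeasurableSet (Aset ε) := fun ε =>
    (measurableSet_lt measurable_const hδm).inter (measurableSet_le hδm measurable_const)
  have hAtend : Tendsto (fun k : ℕ => μ (Aset (1 / (k + 1)))) atTop (𝓝 0) := by
    have hanti : Antitone fun k : ℕ => Aset (1 / (k + 1)) := by
      intro k m hkm x hx
      refine ⟨hx.1, hx.2.trans ?_⟩
      apply one_div_le_one_div_of_le (by positivity)
      have : (k : ℝ) ≤ m := Nat.cast_le.mpr hkm
      linarith
    have hiInter : ⋂ k : ℕ, Aset (1 / (k + 1)) = ∅ := by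
      ext x
      simp only [Set.mem_iInter, Set.mem_empty_iff_false, iff_false, not_forall]
      by_contra hcon
      push_neg at hcon
      obtain ⟨k, hk⟩ := exists_nat_one_div_lt (hcon 0).1
      exact absurd ((hcon k).2) (not_le.mpr (by exact_mod_cast hk))
    have := tendsto_measure_iInter_atTop
      (fun k : ℕ => (hAm (1 / (k + 1))).nullMeasurableSet) hanti ⟨0, measure_ne_top μ _⟩
    rwa [hiInter, measure_empty] at this
  -- exponent
  set γ : ℝ := 1 / (2 : ℝ≥0∞).toReal - 1 / q.toReal with hγ_def
  have hγ : 0 < γ := by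
    rw [hγ_def]
    have h2 : (2 : ℝ≥0∞).toReal = 2 := by norm_num
    rw [h2]
    rcases eq_or_ne q ∞ with hqt | hqt
    · simp [hqt]
    · have : 2 < q.toReal := by
        have := ENNReal.toReal_lt_toReal (by norm_num : (2:ℝ≥0∞) ≠ ∞) hqt
        simpa using this.mpr hq
      have h0 : 0 < q.toReal := by linarith
      have : 1 / q.toReal < 1 / 2 := by
        apply one_div_lt_one_div_of_lt <;> linarith
      linarith
  have hofReal : ∀ (p : ℝ≥0∞) [Fact (1 ≤ p)] (f : Lp ℝ p μ),
      eLpNorm ⇑f p μ = ENNReal.ofReal ‖f‖ := by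
    intro p _ f
    rw [Lp.norm_def, ENNReal.ofReal_toReal (Lp.eLpNorm_ne_top f)]
  have hHold : ∀ (f : Lp ℝ q μ) (S : Set X), MeasurableSet S →
      eLpNorm (S.indicator ⇑f) 2 μ ≤ ENNReal.ofReal ‖f‖ * μ S ^ γ := by
    intro f S hS
    rw [eLpNorm_indicator_eq_eLpNorm_restrict hS]
    calc eLpNorm ⇑f 2 (μ.restrict S)
        ≤ eLpNorm ⇑f q (μ.restrict S) * (μ.restrict S) Set.univ ^ γ :=
          eLpNorm_le_eLpNorm_mul_rpow_measure_univ hq.le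
            ((Lp.aestronglyMeasurable f).restrict)
      _ ≤ ENNReal.ofReal ‖f‖ * μ S ^ γ := by
          refine mul_le_mul' ?_ ?_
          · rw [← hofReal q f]
            exact eLpNorm_mono_measure _ Measure.restrict_le_self
          · rw [Measure.restrict_apply_univ]
  -- choose the measurable small set
  have hc2 : 0 < c / 2 / D := by positivity
  obtain ⟨k, hk⟩ : ∃ k : ℕ, μ (Aset (1 / (k + 1))) < ENNReal.ofReal ((c / 2 / D) ^ γ⁻¹) := by
    have := hAtend.eventually_lt_const
      (show (0:ℝ≥0∞) < ENNReal.ofReal ((c / 2 / D) ^ γ⁻¹) by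
        rw [ENNReal.ofReal_pos]; positivity)
    exact this.exists
  set ε₀ : ℝ := 1 / (k + 1) with hε₀_def
  have hε₀ : 0 < ε₀ := by positivity
  have hμA : (μ (Aset ε₀)).toReal ^ γ ≤ c / 2 / D := by
    have h1 : (μ (Aset ε₀)).toReal ≤ (c / 2 / D) ^ γ⁻¹ :=
      ENNReal.toReal_le_of_le_ofReal (by positivity) hk.le
    calc (μ (Aset ε₀)).toReal ^ γ ≤ ((c / 2 / D) ^ γ⁻¹) ^ γ :=
          Real.rpow_le_rpow ENNReal.toReal_nonneg h1 hγ.le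
      _ = c / 2 / D := by
          rw [← Real.rpow_mul (by positivity), inv_mul_cancel₀ hγ.ne', Real.rpow_one]
  -- choose ε for the middle term
  obtain ⟨ε, hεpos, hεT2⟩ : ∃ ε : ℝ, 0 < ε ∧ ∀ s : ℝ, 0 ≤ s → s ≤ ε →
      ∀ tL : Lp ℝ q μ, ‖tL‖ ≤ D * s →
      eLpNorm (fun x => if ε₀ ≤ |tL x| then tL x else 0) 2 μ ≤
        ENNReal.ofReal (c / 2 * s) := by
    by_cases hqt : q = ∞
    · subst hqt
      refine ⟨ε₀ / (2 * D), by positivity, ?_⟩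
      intro s hs hsε tL htL
      have hae : ∀ᵐ x ∂μ, ‖tL x‖ ≤ ‖tL‖ := by
        filter_upwards [ae_le_eLpNormEssSup (f := ⇑tL) (μ := μ)] with x hx
        have h1 : (‖tL x‖₊ : ℝ≥0∞) ≤ ENNReal.ofReal ‖tL‖ := by
          rw [← hofReal ∞ tL]
          exact hx.trans_eq eLpNorm_exponent_top.symm
        rw [← enorm_eq_nnnorm, ← ofReal_norm_eq_enorm] at h1
        exact (ENNReal.ofReal_le_ofReal_iff (norm_nonneg _)).mp h1
      have hzero : (fun x => if ε₀ ≤ |tL x| then tL x else 0) =ᵐ[μ] 0 := by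
        filter_upwards [hae] with x hx
        have : |tL x| < ε₀ := by
          rw [← Real.norm_eq_abs]
          calc ‖tL x‖ ≤ ‖tL‖ := hx
            _ ≤ D * (ε₀ / (2 * D)) := htL.trans (by gcongr)
            _ = ε₀ / 2 := by field_simp
            _ < ε₀ := by linarith
        simp only [if_neg (not_le.mpr this), Pi.zero_apply]
      rw [eLpNorm_congr_ae hzero, eLpNorm_zero]
      exact zero_le
    · -- finite q
      have hqr : 2 < q.toReal := by
        have := ENNReal.toReal_lt_toReal (by norm_num : (2:ℝ≥0∞) ≠ ∞) hqt
        simpa using this.mpr hq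
      set qr := q.toReal with hqr_def
      set β : ℝ := qr / 2 - 1 with hβ_def
      have hβ : 0 < β := by rw [hβ_def]; linarith
      set Ec : ℝ := ε₀ ^ (1 - qr / 2) * D ^ (qr / 2) with hEc_def
      have hEc : 0 ≤ Ec := by positivity
      refine ⟨(c / 2 / (Ec + 1)) ^ β⁻¹, by positivity, ?_⟩
      intro s hs hsε tL htL
      rcases eq_or_lt_of_le hs with hs0 | hs0
      · -- s = 0
        have htL0 : tL = 0 := by
          rw [← norm_le_zero_iff]
          calc ‖tL‖ ≤ D * s := htL
            _ = 0 := by rw [← hs0]; ring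
        have hzero : (fun x => if ε₀ ≤ |tL x| then tL x else 0) =ᵐ[μ] 0 := by
          rw [htL0]
          filter_upwards [Lp.coeFn_zero (E := ℝ) (p := q) (μ := μ)] with x hx
          rw [hx]
          simp [not_le.mpr hε₀]
        rw [eLpNorm_congr_ae hzero, eLpNorm_zero]
        exact zero_le
      · have hpoint : ∀ᵐ x ∂μ, ‖(fun x => if ε₀ ≤ |tL x| then tL x else 0) x‖ ≤
            ‖(fun x => ε₀ ^ (1 - qr / 2) * ‖tL x‖ ^ (qr / 2)) x‖ := by
          refine Filter.Eventually.of_forall fun x => ?_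
          simp only [Real.norm_eq_abs]
          refine le_trans ?_ (le_abs_self _)
          by_cases hx : ε₀ ≤ |tL x|
          · rw [if_pos hx]
            have hpos : 0 < |tL x| := lt_of_lt_of_le hε₀ hx
            have h1 : |tL x| ^ (1 - qr / 2) ≤ ε₀ ^ (1 - qr / 2) :=
              Real.rpow_le_rpow_of_nonpos hε₀ hx (by linarith)
            calc |tL x| = |tL x| ^ (qr / 2) * |tL x| ^ (1 - qr / 2) := by
                  rw [← Real.rpow_add hpos]
                  norm_num
              _ ≤ |tL x| ^ (qr / 2) * ε₀ ^ (1 - qr / 2) := by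
                  exact mul_le_mul_of_nonneg_left h1 (Real.rpow_nonneg (abs_nonneg _) _)
              _ = ε₀ ^ (1 - qr / 2) * |tL x| ^ (qr / 2) := by ring
          · rw [if_neg hx, abs_zero]
            positivity
        have hsmul : (fun x => ε₀ ^ (1 - qr / 2) * ‖tL x‖ ^ (qr / 2)) =
            (ε₀ ^ (1 - qr / 2)) • fun x => ‖tL x‖ ^ (qr / 2) := rfl
        have hq2 : (2 : ℝ≥0∞) * ENNReal.ofReal (qr / 2) = q := by
          rw [ENNReal.ofReal_div_of_pos two_pos, ENNReal.ofReal_ofNat,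
            hqr_def, ENNReal.ofReal_toReal hqt,
            ENNReal.mul_div_cancel two_ne_zero ENNReal.ofNat_ne_top]
        calc eLpNorm (fun x => if ε₀ ≤ |tL x| then tL x else 0) 2 μ
            ≤ eLpNorm (fun x => ε₀ ^ (1 - qr / 2) * ‖tL x‖ ^ (qr / 2)) 2 μ :=
              eLpNorm_mono_ae hpoint
          _ = (‖(ε₀ ^ (1 - qr / 2) : ℝ)‖₊ : ℝ≥0∞) *
              eLpNorm (fun x => ‖tL x‖ ^ (qr / 2)) 2 μ := by
              rw [hsmul, eLpNorm_const_smul, enorm_eq_nnnorm]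
          _ = ENNReal.ofReal (ε₀ ^ (1 - qr / 2)) *
              (eLpNorm ⇑tL q μ) ^ (qr / 2) := by
              rw [← enorm_eq_nnnorm, Real.enorm_eq_ofReal (by positivity),
                eLpNorm_norm_rpow ⇑tL (by positivity : (0:ℝ) < qr / 2), hq2]
          _ ≤ ENNReal.ofReal (ε₀ ^ (1 - qr / 2)) *
              (ENNReal.ofReal (D * s)) ^ (qr / 2) := by
              refine mul_le_mul_right (ENNReal.rpow_le_rpow ?_ (by positivity)) _
              rw [hofReal q tL]
              exact ENNReal.ofReal_le_ofReal htL
          _ = ENNReal.ofReal (ε₀ ^ (1 - qr / 2) * (D * s) ^ (qr / 2)) := by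
              rw [ENNReal.ofReal_rpow_of_nonneg (by positivity) (by positivity),
                ← ENNReal.ofReal_mul (by positivity)]
          _ ≤ ENNReal.ofReal (c / 2 * s) := by
              refine ENNReal.ofReal_le_ofReal ?_
              have hDs : (D * s) ^ (qr / 2) = D ^ (qr / 2) * (s ^ β * s) := by
                rw [Real.mul_rpow hD.le hs]
                congr 1
                rw [show qr / 2 = β + 1 by rw [hβ_def]; ring, Real.rpow_add hs0,
                  Real.rpow_one]
              have hsβ : s ^ β ≤ c / 2 / (Ec + 1) := by
                calc s ^ β ≤ ((c / 2 / (Ec + 1)) ^ β⁻¹) ^ β :=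
                      Real.rpow_le_rpow hs hsε hβ.le
                  _ = c / 2 / (Ec + 1) := by
                      rw [← Real.rpow_mul (by positivity), inv_mul_cancel₀ hβ.ne',
                        Real.rpow_one]
              calc ε₀ ^ (1 - qr / 2) * (D * s) ^ (qr / 2)
                  = Ec * (s ^ β * s) := by rw [hDs, hEc_def]; ring
                _ ≤ Ec * (c / 2 / (Ec + 1) * s) :=
                    mul_le_mul_of_nonneg_left
                      (mul_le_mul_of_nonneg_right hsβ hs) hEc
                _ ≤ c / 2 * s := by
                    rw [show Ec * (c / 2 / (Ec + 1) * s) = c / 2 * s * (Ec / (Ec + 1)) by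
                      field_simp]
                    have h1 : Ec / (Ec + 1) ≤ 1 := by
                      rw [div_le_one (by linarith)]; linarith
                    calc c / 2 * s * (Ec / (Ec + 1)) ≤ c / 2 * s * 1 :=
                          mul_le_mul_of_nonneg_left h1 (by positivity)
                      _ = c / 2 * s := mul_one _
  refine ⟨ε, hεpos, ?_⟩
  intro w'L dL RL s hs hsε hw' hR
  set tL : Lp ℝ q μ := w'L - wL with htL_def
  set eL : Lp ℝ q μ := w'L - wL - dL with heL_def
  set g1 : X → ℝ := (Aset ε₀).indicator ⇑tL with hg1_def
  set g2 : X → ℝ := fun x => if ε₀ ≤ |tL x| then tL x else 0 with hg2_def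
  -- the master pointwise bound
  have hmaster : ∀ᵐ x ∂μ, ‖RL x‖ ≤
      ‖((fun x => ‖g1 x‖) + ((fun x => ‖g2 x‖) + fun x => ‖eL x‖)) x‖ := by
    filter_upwards [hR, hab, hama, hbma, hwma, Lp.coeFn_sub w'L wL,
      Lp.coeFn_sub (w'L - wL) dL] with x hRx habx hax hbx hwx htx hex
    have htx' : tL x = w'L x - wL x := by rw [htL_def, htx]; rfl
    have hex' : eL x = tL x - dL x := by rw [heL_def, hex]; rfl
    set A := aL x
    set B := bL x
    set R := wL x
    set R' := w'L x
    have key := residual_key A B R R' habx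
    set R₁ := max A (min R' B) - max A (min R B) - (if A < R' ∧ R' < B then R' - R else 0)
      with hR₁_def
    have hRLx : RL x = R₁ + (if A < R' ∧ R' < B then tL x - dL x else 0) := by
      rw [hRx, hR₁_def]
      by_cases hI : A < R' ∧ R' < B
      · rw [if_pos hI, if_pos hI, if_pos hI, htx']; ring
      · rw [if_neg hI, if_neg hI, if_neg hI]; ring
    have hstep1 : ‖RL x‖ ≤ |R₁| + |eL x| := by
      rw [hRLx, Real.norm_eq_abs]
      by_cases hI : A < R' ∧ R' < B
      · rw [if_pos hI, ← hex']
        exact abs_add_le _ _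
      · rw [if_neg hI, add_zero]
        exact le_add_of_le_of_nonneg le_rfl (abs_nonneg _)
    have hstep2 : |R₁| ≤ |g1 x| + |g2 x| := by
      by_cases hR0 : R₁ = 0
      · rw [hR0, abs_zero]; positivity
      · obtain ⟨hδpos, hδle⟩ := key.2 hR0
        have hR1t : |R₁| ≤ |tL x| := by rw [htx']; exact key.1
        have hδmx : δm x = deltaAux A B R := by
          rw [hδm_def]
          simp only [← hax, ← hbx, ← hwx]
        by_cases hδε : deltaAux A B R ≤ ε₀
        · have hxA : x ∈ Aset ε₀ := by
            rw [hAset_def]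
            exact ⟨by rw [hδmx]; exact hδpos, by rw [hδmx]; exact hδε⟩
          have : g1 x = tL x := by rw [hg1_def, Set.indicator_of_mem hxA]
          rw [this]
          exact le_add_of_le_of_nonneg hR1t (abs_nonneg _)
        · have : g2 x = tL x := by
            rw [hg2_def]
            refine if_pos ?_
            rw [htx']
            exact le_trans (le_of_not_ge hδε) hδle
          rw [this]
          exact le_add_of_nonneg_of_le (abs_nonneg _) hR1t
    have hnn : 0 ≤ ‖g1 x‖ + (‖g2 x‖ + ‖eL x‖) := by positivity
    rw [Pi.add_apply, Pi.add_apply, Real.norm_eq_abs (‖g1 x‖ + _), abs_of_nonneg hnn]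
    simp only [Real.norm_eq_abs]
    calc ‖RL x‖ ≤ |R₁| + |eL x| := hstep1
      _ ≤ (|g1 x| + |g2 x|) + |eL x| := by linarith
      _ = |g1 x| + (|g2 x| + |eL x|) := by ring
  -- measurability
  have hg1m : AEStronglyMeasurable g1 μ :=
    (Lp.aestronglyMeasurable tL).indicator (hAm ε₀)
  have hg2m : AEStronglyMeasurable g2 μ := by
    have hφ : Measurable fun y : ℝ => if ε₀ ≤ |y| then y else 0 :=
      Measurable.ite (measurableSet_le measurable_const measurable_abs)
        measurable_id measurable_const
    exact (hφ.comp_aemeasurable (Lp.aestronglyMeasurable tL).aemeasurable).aestronglyMeasurable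
  have heLm : AEStronglyMeasurable ⇑eL μ := Lp.aestronglyMeasurable eL
  -- eLpNorm chain
  have hchain : eLpNorm ⇑RL 2 μ ≤ eLpNorm g1 2 μ + (eLpNorm g2 2 μ + eLpNorm ⇑eL 2 μ) := by
    calc eLpNorm ⇑RL 2 μ
        ≤ eLpNorm ((fun x => ‖g1 x‖) + ((fun x => ‖g2 x‖) + fun x => ‖eL x‖)) 2 μ :=
          eLpNorm_mono_ae hmaster
      _ ≤ eLpNorm (fun x => ‖g1 x‖) 2 μ +
          eLpNorm ((fun x => ‖g2 x‖) + fun x => ‖eL x‖) 2 μ :=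
          eLpNorm_add_le hg1m.norm (hg2m.norm.add heLm.norm) one_le_two
      _ ≤ eLpNorm (fun x => ‖g1 x‖) 2 μ +
          (eLpNorm (fun x => ‖g2 x‖) 2 μ + eLpNorm (fun x => ‖eL x‖) 2 μ) := by
          exact add_le_add_right (eLpNorm_add_le hg2m.norm heLm.norm one_le_two) _
      _ = eLpNorm g1 2 μ + (eLpNorm g2 2 μ + eLpNorm ⇑eL 2 μ) := by
          rw [eLpNorm_norm, eLpNorm_norm, eLpNorm_norm]
  -- term 1
  have hT1 : eLpNorm g1 2 μ ≤ ENNReal.ofReal (c / 2 * s) := by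
    calc eLpNorm g1 2 μ ≤ ENNReal.ofReal ‖tL‖ * μ (Aset ε₀) ^ γ := hHold tL _ (hAm ε₀)
      _ ≤ ENNReal.ofReal (D * s) * ENNReal.ofReal (c / 2 / D) := by
          refine mul_le_mul' (ENNReal.ofReal_le_ofReal hw') ?_
          have h1 : μ (Aset ε₀) ^ γ = ENNReal.ofReal ((μ (Aset ε₀)).toReal ^ γ) := by
            rw [ENNReal.toReal_rpow, ENNReal.ofReal_toReal]
            exact ENNReal.rpow_ne_top_of_nonneg hγ.le (measure_ne_top μ _)
          rw [h1]
          exact ENNReal.ofReal_le_ofReal hμA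
      _ = ENNReal.ofReal (D * s * (c / 2 / D)) := by
          rw [← ENNReal.ofReal_mul (by positivity)]
      _ ≤ ENNReal.ofReal (c / 2 * s) := by
          refine ENNReal.ofReal_le_ofReal (le_of_eq ?_)
          have hD0 : D ≠ 0 := hD.ne'
          field_simp
  -- term 2
  have hT2 : eLpNorm g2 2 μ ≤ ENNReal.ofReal (c / 2 * s) := by
    have : ‖tL‖ ≤ D * s := hw'
    exact hεT2 s hs hsε tL this
  -- term 3
  have hT3 : eLpNorm ⇑eL 2 μ ≤ ENNReal.ofReal ((μ Set.univ).toReal ^ γ * ‖eL‖) := by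
    calc eLpNorm ⇑eL 2 μ ≤ eLpNorm ⇑eL q μ * μ Set.univ ^ γ :=
          eLpNorm_le_eLpNorm_mul_rpow_measure_univ hq.le heLm
      _ = ENNReal.ofReal ‖eL‖ * ENNReal.ofReal ((μ Set.univ).toReal ^ γ) := by
          rw [hofReal q eL, ENNReal.toReal_rpow, ENNReal.ofReal_toReal
            (ENNReal.rpow_ne_top_of_nonneg hγ.le (measure_ne_top μ _))]
      _ = ENNReal.ofReal ((μ Set.univ).toReal ^ γ * ‖eL‖) := by
          rw [← ENNReal.ofReal_mul (norm_nonneg _), mul_comm]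
  -- conclude
  have hfinal : eLpNorm ⇑RL 2 μ ≤
      ENNReal.ofReal (c * s + (μ Set.univ).toReal ^ γ * ‖eL‖) := by
    calc eLpNorm ⇑RL 2 μ ≤ eLpNorm g1 2 μ + (eLpNorm g2 2 μ + eLpNorm ⇑eL 2 μ) := hchain
      _ ≤ ENNReal.ofReal (c / 2 * s) + (ENNReal.ofReal (c / 2 * s) +
          ENNReal.ofReal ((μ Set.univ).toReal ^ γ * ‖eL‖)) :=
          add_le_add hT1 (add_le_add hT2 hT3)
      _ = ENNReal.ofReal (c / 2 * s + (c / 2 * s + (μ Set.univ).toReal ^ γ * ‖eL‖)) := by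
          rw [← ENNReal.ofReal_add (by positivity)
              (mul_nonneg (Real.rpow_nonneg ENNReal.toReal_nonneg _) (norm_nonneg _)),
            ← ENNReal.ofReal_add (by positivity)
              (add_nonneg (by positivity)
                (mul_nonneg (Real.rpow_nonneg ENNReal.toReal_nonneg _) (norm_nonneg _)))]
      _ = ENNReal.ofReal (c * s + (μ Set.univ).toReal ^ γ * ‖eL‖) := by ring_nf
  rw [Lp.norm_def]
  exact ENNReal.toReal_le_of_le_ofReal
    (add_nonneg (mul_nonneg hc.le hs)
      (mul_nonneg (Real.rpow_nonneg ENNReal.toReal_nonneg _) (norm_nonneg _))) hfinal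



set_option maxHeartbeats 2000000 in
/-- (Chain rule for the semismooth Newton map.)  On a bounded domain `Ω`,
for `q > 2`, `α > 0` and bounds `u_a^ν ≤ u_b^ν` in `L²(Ω)`, if `F̃ : U → L^q(Ω)^N` is Newton
differentiable with locally Lipschitz components and locally bounded Newton derivative
`D_N F̃`, then `G(u) = u − P_{U_ad}(−α⁻¹ F̃(u))` is Newton differentiable with
`D_N G(u) = Id + α⁻¹ χ_I(u)·D_N F̃(u)`, where `χ_I(u)` is the componentwise indicator of
`I^ν(u) = {u_a^ν < −α⁻¹ F̃^ν(u) < u_b^ν}`. -/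
theorem stmt12 {n N : ℕ} (Ω : Set (EuclideanSpace ℝ (Fin n)))
    (hΩbd : Bornology.IsBounded Ω)
    (q : ℝ≥0∞) [Fact (1 ≤ q)] (hq : 2 < q)
    (α : ℝ) (hα : 0 < α)
    (ua ub : Fin N → L2Sp Ω)
    (hab : ∀ ν, ∀ᵐ x ∂(volume.restrict Ω), ua ν x ≤ ub ν x)
    (Ft : USp N Ω → UqSp N q Ω)
    (DF : USp N Ω → (USp N Ω →L[ℝ] UqSp N q Ω))
    -- `F̃` is Newton differentiable (componentwise) with Newton derivative `D_N F̃`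
    (hNF : ∀ u : USp N Ω,
      (fun v => Ft (u + v) - Ft u - DF (u + v) v) =o[𝓝 0] fun v : USp N Ω => v)
    -- `F̃` is locally Lipschitz
    (hLip : LocallyLipschitz Ft)
    -- `D_N F̃` is bounded near every point
    (hDFbd : ∀ u : USp N Ω, ∃ ε > (0 : ℝ), ∃ K : ℝ, ∀ w, ‖w - u‖ ≤ ε → ‖DF w‖ ≤ K)
    -- `P` is the componentwise pointwise projection onto `U_ad`
    (P : UqSp N q Ω → USp N Ω)
    (hP : ∀ u ν, ⇑(P u ν) =ᵐ[volume.restrict Ω]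
      fun x => max (ua ν x) (min (u ν x) (ub ν x)))
    (G : USp N Ω → USp N Ω)
    (hG : ∀ u, G u = u - P (-(α⁻¹) • Ft u))
    -- `E u = χ_I(u)·D_N F̃(u)`, i.e. `D_N F̃(u)` followed by componentwise multiplication
    -- with the indicator of `I^ν(u) = {u_a^ν < −α⁻¹ F̃^ν(u) < u_b^ν}`
    (E : USp N Ω → (USp N Ω →L[ℝ] USp N Ω))
    (hE : ∀ u h ν, ⇑(E u h ν) =ᵐ[volume.restrict Ω]
      ({x | ua ν x < -α⁻¹ * (Ft u ν) x ∧ -α⁻¹ * (Ft u ν) x < ub ν x}).indicator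
        ⇑(DF u h ν)) :
    ∀ u : USp N Ω,
      (fun v => G (u + v) - G u - (v + α⁻¹ • E (u + v) v)) =o[𝓝 0]
        fun v : USp N Ω => v := by
  intro u
  haveI hfin : IsFiniteMeasure (volume.restrict Ω : Measure (EuclideanSpace ℝ (Fin n))) :=
    ⟨by rw [Measure.restrict_apply_univ]; exact hΩbd.measure_lt_top⟩
  have hαinv : (0 : ℝ) < α⁻¹ := inv_pos.mpr hα
  -- Lipschitz data near u
  obtain ⟨K, sU, hsU, hKlip⟩ := hLip u
  obtain ⟨ε₁, hε₁, hball⟩ := Metric.mem_nhds_iff.mp hsU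
  have hFtLip : ∀ v : USp N Ω, ‖v‖ < ε₁ → ‖Ft (u + v) - Ft u‖ ≤ ((K : ℝ) + 1) * ‖v‖ := by
    intro v hv
    have h1 : u + v ∈ sU := hball (by simpa [Metric.mem_ball, dist_eq_norm] using hv)
    have h2 : u ∈ sU := hball (Metric.mem_ball_self hε₁)
    have h3 := hKlip.dist_le_mul _ h1 _ h2
    rw [dist_eq_norm, dist_eq_norm, add_sub_cancel_left] at h3
    calc ‖Ft (u + v) - Ft u‖ ≤ (K : ℝ) * ‖v‖ := h3
      _ ≤ ((K : ℝ) + 1) * ‖v‖ := by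
          have := norm_nonneg v
          nlinarith
  set D : ℝ := α⁻¹ * ((K : ℝ) + 1) with hD_def
  have hD : 0 < D := by positivity
  set CΩ : ℝ := (((volume.restrict Ω : Measure (EuclideanSpace ℝ (Fin n)))) Set.univ).toReal ^
    (1 / (2 : ℝ≥0∞).toReal - 1 / q.toReal) with hCΩ_def
  have hCΩ : 0 ≤ CΩ := Real.rpow_nonneg ENNReal.toReal_nonneg _
  have hcomp : ∀ ν : Fin N,
      (fun v : USp N Ω => (G (u + v) - G u - (v + α⁻¹ • E (u + v) v)) ν)
        =o[𝓝 0] (fun v : USp N Ω => v) := by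
    intro ν
    rw [isLittleO_iff]
    intro c hc
    obtain ⟨ε, hεpos, hcore⟩ := proj_residual_bound hq (ua ν) (ub ν) (hab ν)
      ((-(α⁻¹) • Ft u) ν) (show (0:ℝ) < c / 2 by positivity) hD
    set c₂ : ℝ := (c / 2) / (α⁻¹ * (CΩ + 1)) with hc₂_def
    have hc₂ : 0 < c₂ := by positivity
    have hNF' := isLittleO_iff.mp (hNF u) hc₂
    filter_upwards [hNF', Metric.ball_mem_nhds (0 : USp N Ω) (lt_min hε₁ hεpos)]
      with v hv1 hv2
    rw [mem_ball_zero_iff, lt_min_iff] at hv2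
    obtain ⟨hvε₁, hvε⟩ := hv2
    -- the objects
    set wL := (-(α⁻¹) • Ft u) ν with hwL_def
    set w'L := (-(α⁻¹) • Ft (u + v)) ν with hw'L_def
    set dL := (-(α⁻¹) : ℝ) • (DF (u + v) v ν) with hdL_def
    set RL : L2Sp Ω := -((G (u + v) - G u - (v + α⁻¹ • E (u + v) v)) ν) with hRL_def
    -- Lp-level identity
    have hRLfor : RL = P (-(α⁻¹) • Ft (u + v)) ν - P (-(α⁻¹) • Ft u) ν
        + α⁻¹ • (E (u + v) v ν) := by
      rw [hRL_def]
      simp only [hG, PiLp.sub_apply, PiLp.add_apply, PiLp.smul_apply]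
      abel
    -- the a.e. description of RL
    have hR : ⇑RL =ᵐ[volume.restrict Ω] fun x =>
        max (ua ν x) (min (w'L x) (ub ν x)) - max (ua ν x) (min (wL x) (ub ν x))
          - (if ua ν x < w'L x ∧ w'L x < ub ν x then dL x else 0) := by
      have hw'c : ⇑w'L =ᵐ[volume.restrict Ω] fun x => -α⁻¹ * (Ft (u + v) ν) x := by
        rw [hw'L_def]
        filter_upwards [Lp.coeFn_smul (-(α⁻¹) : ℝ) (Ft (u + v) ν)] with x hx
        rw [PiLp.smul_apply, hx]
        simp [smul_eq_mul]
      have hdc : ⇑dL =ᵐ[volume.restrict Ω] fun x => -α⁻¹ * (DF (u + v) v ν) x := by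
        rw [hdL_def]
        filter_upwards [Lp.coeFn_smul (-(α⁻¹) : ℝ) (DF (u + v) v ν)] with x hx
        rw [hx]
        simp [smul_eq_mul]
      rw [hRLfor]
      filter_upwards [hP (-(α⁻¹) • Ft (u + v)) ν, hP (-(α⁻¹) • Ft u) ν,
        hE (u + v) v ν, hw'c, hdc,
        Lp.coeFn_add (P (-(α⁻¹) • Ft (u + v)) ν - P (-(α⁻¹) • Ft u) ν)
          (α⁻¹ • (E (u + v) v ν)),
        Lp.coeFn_sub (P (-(α⁻¹) • Ft (u + v)) ν) (P (-(α⁻¹) • Ft u) ν),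
        Lp.coeFn_smul (α⁻¹ : ℝ) (E (u + v) v ν)] with x hP1 hP2 hE1 hw'x hdx hadd hsub hsmul
      rw [hadd]
      simp only [Pi.add_apply]
      rw [hsub]
      simp only [Pi.sub_apply]
      rw [hP1, hP2, hsmul]
      simp only [Pi.smul_apply, smul_eq_mul]
      rw [hE1]
      rw [Set.indicator_apply]
      have hmem : (x ∈ {x | ua ν x < -α⁻¹ * (Ft (u + v) ν) x ∧
          -α⁻¹ * (Ft (u + v) ν) x < ub ν x}) ↔ (ua ν x < w'L x ∧ w'L x < ub ν x) := by
        rw [Set.mem_setOf_eq, hw'x]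
      by_cases hcond : ua ν x < w'L x ∧ w'L x < ub ν x
      · rw [if_pos (hmem.mpr hcond), if_pos hcond, hdx]
        rw [hw'x]
        ring
      · rw [if_neg (fun hh => hcond (hmem.mp hh)), if_neg hcond, hw'x]
        ring
    -- norm bound on the increment
    have htnorm : ‖w'L - wL‖ ≤ D * ‖v‖ := by
      have h1 : w'L - wL = (-(α⁻¹) : ℝ) • ((Ft (u + v) - Ft u) ν) := by
        rw [hw'L_def, hwL_def]
        simp only [PiLp.smul_apply, PiLp.sub_apply, smul_sub]
      rw [h1, norm_smul]
      simp only [norm_neg, Real.norm_eq_abs, abs_of_pos hαinv]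
      calc α⁻¹ * ‖(Ft (u + v) - Ft u) ν‖ ≤ α⁻¹ * ‖Ft (u + v) - Ft u‖ := by
            exact mul_le_mul_of_nonneg_left (pilp_apply_norm_le _ ν) hαinv.le
        _ ≤ α⁻¹ * (((K : ℝ) + 1) * ‖v‖) :=
            mul_le_mul_of_nonneg_left (hFtLip v hvε₁) hαinv.le
        _ = D * ‖v‖ := by rw [hD_def]; ring
    -- apply the core lemma
    have hmain := hcore w'L dL RL ‖v‖ (norm_nonneg v) hvε.le htnorm hR
    -- bound the linearization error term
    have herr : ‖w'L - wL - dL‖ ≤ α⁻¹ * (c₂ * ‖v‖) := by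
      have h1 : w'L - wL - dL =
          (-(α⁻¹) : ℝ) • ((Ft (u + v) - Ft u - DF (u + v) v) ν) := by
        rw [hw'L_def, hwL_def, hdL_def]
        simp only [PiLp.smul_apply, PiLp.sub_apply, smul_sub]
      rw [h1, norm_smul]
      simp only [norm_neg, Real.norm_eq_abs, abs_of_pos hαinv]
      calc α⁻¹ * ‖(Ft (u + v) - Ft u - DF (u + v) v) ν‖
          ≤ α⁻¹ * ‖Ft (u + v) - Ft u - DF (u + v) v‖ :=
            mul_le_mul_of_nonneg_left (pilp_apply_norm_le _ ν) hαinv.le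
        _ ≤ α⁻¹ * (c₂ * ‖v‖) := mul_le_mul_of_nonneg_left hv1 hαinv.le
    -- finish
    have hRLnorm : ‖(G (u + v) - G u - (v + α⁻¹ • E (u + v) v)) ν‖ = ‖RL‖ := by
      rw [hRL_def, norm_neg]
    rw [hRLnorm]
    calc ‖RL‖ ≤ c / 2 * ‖v‖ + CΩ * ‖w'L - wL - dL‖ := by
          rw [hCΩ_def]; exact hmain
      _ ≤ c / 2 * ‖v‖ + CΩ * (α⁻¹ * (c₂ * ‖v‖)) := by
          have := mul_le_mul_of_nonneg_left herr hCΩ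
          linarith
      _ ≤ c / 2 * ‖v‖ + c / 2 * ‖v‖ := by
          have hkey : CΩ * (α⁻¹ * c₂) ≤ c / 2 := by
            rw [hc₂_def]
            rw [show CΩ * (α⁻¹ * (c / 2 / (α⁻¹ * (CΩ + 1)))) =
              (c / 2) * (CΩ / (CΩ + 1)) by field_simp]
            have h1 : CΩ / (CΩ + 1) ≤ 1 := by
              rw [div_le_one (by linarith)]; linarith
            calc (c / 2) * (CΩ / (CΩ + 1)) ≤ (c / 2) * 1 :=
                  mul_le_mul_of_nonneg_left h1 (by positivity)
              _ = c / 2 := mul_one _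
          have h2 : CΩ * (α⁻¹ * (c₂ * ‖v‖)) = (CΩ * (α⁻¹ * c₂)) * ‖v‖ := by ring
          rw [h2]
          have := mul_le_mul_of_nonneg_right hkey (norm_nonneg v)
          linarith
      _ = c * ‖v‖ := by ring
  have h1 : (fun v : USp N Ω =>
      ∑ ν, ‖(G (u + v) - G u - (v + α⁻¹ • E (u + v) v)) ν‖) =o[𝓝 0]
      (fun v : USp N Ω => v) := by
    have := fun ν (_ : ν ∈ Finset.univ) => (hcomp ν).norm_left
    exact Asymptotics.IsLittleO.fun_sum this
  refine (Asymptotics.IsBigO.of_bound 1 ?_).trans_isLittleO h1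
  filter_upwards with v
  rw [one_mul, Real.norm_eq_abs]
  exact (pilp_norm_le_sum _).trans (le_abs_self _)
end
end

section
/- Let H be a real Hilbert space, P : H → H an orthogonal projection (a bounded self-adjoint linear operator with P² = P), M : H → H a bounded linear operator, and c > 0 such that ⟨w + P M P w, w⟩ ≥ c‖w‖² for all w ∈ H. Then the operator Id + P M : H → H is bijective and its inverse is bounded, with ‖(Id + P M)^{−1} f‖ ≤ (1 + (1 + ‖M‖)/c)‖f‖ for all f ∈ H. -/
open scoped RealInnerProductSpace

/-- Let `H` be a real Hilbert space, `P : H → H` an orthogonal projection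
(a bounded self-adjoint linear operator with `P² = P`), `M : H → H` a bounded linear operator,
and `c > 0` such that `⟪w + P M P w, w⟫ ≥ c‖w‖²` for all `w`.  Then `Id + P M` is bijective
with bounded inverse, `‖(Id + P M)⁻¹ f‖ ≤ (1 + (1 + ‖M‖)/c) ‖f‖` for all `f`. -/
theorem stmt13 {H : Type*} [NormedAddCommGroup H] [InnerProductSpace ℝ H] [CompleteSpace H]
    (P M : H →L[ℝ] H) (hPsa : IsSelfAdjoint P) (hPproj : P ∘L P = P)
    (c : ℝ) (hc : 0 < c)
    (hcoer : ∀ w : H, c * ‖w‖ ^ 2 ≤ ⟪w + P (M (P w)), w⟫) :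
    Function.Bijective (ContinuousLinearMap.id ℝ H + P ∘L M) ∧
      ∀ w : H, ‖w‖ ≤ (1 + (1 + ‖M‖) / c) * ‖(ContinuousLinearMap.id ℝ H + P ∘L M) w‖ := by
  set T : H →L[ℝ] H := ContinuousLinearMap.id ℝ H + P ∘L M with hT
  set A : H →L[ℝ] H := ContinuousLinearMap.id ℝ H + P ∘L (M ∘L P) with hA
  have hPP : ∀ x : H, P (P x) = P x := by
    intro x
    have := ContinuousLinearMap.ext_iff.1 hPproj x
    simpa using this
  have hsym : ∀ x y : H, ⟪P x, y⟫ = ⟪x, P y⟫ := fun x y => hPsa.isSymmetric x y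
  have hAapp : ∀ w : H, A w = w + P (M (P w)) := by intro w; simp [hA]
  have hTapp : ∀ w : H, T w = w + P (M w) := by intro w; simp [hT]
  -- norm of P
  have hPle : ∀ x : H, ‖P x‖ ≤ ‖x‖ := by
    intro x
    have h1 : ‖P x‖ ^ 2 = ⟪x, P x⟫ := by
      rw [← real_inner_self_eq_norm_sq, hsym, hPP]
    have h2 : ⟪x, P x⟫ ≤ ‖x‖ * ‖P x‖ := real_inner_le_norm x (P x)
    rcases eq_or_lt_of_le (norm_nonneg (P x)) with h | h
    · rw [← h]; exact norm_nonneg x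
    · nlinarith
  have hQle : ∀ x : H, ‖x - P x‖ ≤ ‖x‖ := by
    intro x
    have h0 : ⟪x - P x, P x⟫ = 0 := by
      rw [← hsym]
      simp [map_sub, hPP]
    have h1 : ‖x - P x‖ ^ 2 = ⟪x - P x, x⟫ := by
      rw [← real_inner_self_eq_norm_sq]
      have : ⟪x - P x, x - P x⟫ = ⟪x - P x, x⟫ - ⟪x - P x, P x⟫ := inner_sub_right _ _ _
      rw [this, h0, sub_zero]
    have h2 : ⟪x - P x, x⟫ ≤ ‖x - P x‖ * ‖x‖ := real_inner_le_norm _ _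
    rcases eq_or_lt_of_le (norm_nonneg (x - P x)) with h | h
    · rw [← h]; exact norm_nonneg x
    · nlinarith
  -- coercivity bound for A
  have hAnorm : ∀ w : H, c * ‖w‖ ≤ ‖A w‖ := by
    intro w
    have h1 := hcoer w
    rw [← hAapp w] at h1
    have h2 : ⟪A w, w⟫ ≤ ‖A w‖ * ‖w‖ := real_inner_le_norm _ _
    rcases eq_or_lt_of_le (norm_nonneg w) with h | h
    · rw [← h]; simp [norm_nonneg]
    · nlinarith
  -- A is surjective
  have hAsurj : Function.Surjective A := by
    have hal : AntilipschitzWith (id (α := NNReal) ⟨c, hc.le⟩)⁻¹ A := by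
      apply AntilipschitzWith.of_le_mul_dist
      intro x y
      have := hAnorm (x - y)
      rw [map_sub] at this
      rw [dist_eq_norm, dist_eq_norm]
      rw [NNReal.coe_inv]
      calc ‖x - y‖ ≤ c⁻¹ * (c * ‖x - y‖) := by
            rw [← mul_assoc, inv_mul_cancel₀ hc.ne', one_mul]
        _ ≤ c⁻¹ * ‖A x - A y‖ := by
            exact mul_le_mul_of_nonneg_left this (inv_nonneg.2 hc.le)
    have hclosed : IsClosed (Set.range A) :=
      hal.isClosed_range A.uniformContinuous
    set K : Submodule ℝ H := LinearMap.range (A : H →ₗ[ℝ] H) with hK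
    have hKclosed : IsClosed (K : Set H) := by
      have : (K : Set H) = Set.range A := by
        ext x; simp [hK, LinearMap.mem_range, Set.mem_range]
      rw [this]; exact hclosed
    haveI : CompleteSpace K := hKclosed.completeSpace_coe
    have hKtop : K = ⊤ := by
      rw [← Submodule.orthogonal_eq_bot_iff]
      rw [Submodule.eq_bot_iff]
      intro g hg
      have hAg : A g ∈ K := LinearMap.mem_range.2 ⟨g, rfl⟩
      have h0 : ⟪A g, g⟫ = 0 := (Submodule.mem_orthogonal K g).1 hg (A g) hAg
      have h1 := hcoer g
      rw [← hAapp g, h0] at h1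
      have : ‖g‖ ^ 2 ≤ 0 := by nlinarith
      have : ‖g‖ = 0 := by nlinarith [sq_nonneg ‖g‖, norm_nonneg g]
      exact norm_eq_zero.1 this
    intro f
    have : f ∈ K := hKtop ▸ Submodule.mem_top
    obtain ⟨u, hu⟩ := LinearMap.mem_range.1 this
    exact ⟨u, hu⟩
  -- key computation: T w - P (T w) = w - P w
  have key1 : ∀ w : H, T w - P (T w) = w - P w := by
    intro w
    rw [hTapp]
    rw [map_add, hPP]
    abel
  -- key: P (T w) = P w + P (M w)
  have hPT : ∀ w : H, P (T w) = P w + P (M w) := by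
    intro w
    rw [hTapp, map_add, hPP]
  -- injectivity of T
  have hTinj : Function.Injective T := by
    intro x y hxy
    rw [← sub_eq_zero, ← map_sub] at hxy
    set w := x - y with hw
    have h1 : w - P w = 0 := by rw [← key1 w, hxy]; simp
    have h2 : w = P w := by rwa [sub_eq_zero] at h1
    have h3 : A w = 0 := by
      rw [hAapp, ← h2, ← hTapp, hxy]
    have h4 := hAnorm w
    rw [h3, norm_zero] at h4
    have h5 : ‖w‖ ≤ 0 := by nlinarith [norm_nonneg w]
    have hw0 : w = 0 := norm_eq_zero.1 (le_antisymm h5 (norm_nonneg w))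
    rw [← sub_eq_zero]; exact hw0
  -- surjectivity of T
  have hTsurj : Function.Surjective T := by
    intro f
    set v := f - P f with hv
    obtain ⟨u, hu⟩ := hAsurj (P f - P (M v))
    -- u = P u
    have huP : u = P u := by
      have h1 : A u - P (A u) = u - P u := by
        rw [hAapp, map_add, hPP]; abel
      have h2 : A u - P (A u) = 0 := by
        rw [hu]
        have e1 : P (P f - P (M v)) = P f - P (M v) := by
          rw [map_sub, hPP, hPP]
        rw [e1]; abel
      rw [h1] at h2
      rw [← sub_eq_zero]
      exact h2
    refine ⟨u + v, ?_⟩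
    have : T (u + v) = u + P (M u) + (v + P (M v)) := by
      rw [hTapp, map_add, map_add]; abel
    rw [this]
    have hMu : P (M u) = P (M (P u)) := by rw [← huP]
    rw [hMu]
    have : u + P (M (P u)) = A u := (hAapp u).symm
    rw [this, hu]
    rw [hv]; abel
  -- the norm bound
  refine ⟨⟨hTinj, hTsurj⟩, ?_⟩
  intro w
  set f := T w with hf
  have hwP : w - P w = f - P f := (key1 w).symm
  have hAPw : A (P w) = P f - P (M (f - P f)) := by
    rw [← hwP, hAapp, hPP, hf, hPT, map_sub, map_sub]
    abel
  have hMnorm : ‖M (f - P f)‖ ≤ ‖M‖ * ‖f - P f‖ := M.le_opNorm _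
  have hQf : ‖f - P f‖ ≤ ‖f‖ := hQle f
  have hPf : ‖P f‖ ≤ ‖f‖ := hPle f
  have hPMle : ‖P (M (f - P f))‖ ≤ ‖M‖ * ‖f‖ := by
    calc ‖P (M (f - P f))‖ ≤ ‖M (f - P f)‖ := hPle _
      _ ≤ ‖M‖ * ‖f - P f‖ := hMnorm
      _ ≤ ‖M‖ * ‖f‖ := mul_le_mul_of_nonneg_left hQf (norm_nonneg M)
  have hAle : ‖A (P w)‖ ≤ (1 + ‖M‖) * ‖f‖ := by
    rw [hAPw]
    calc ‖P f - P (M (f - P f))‖ ≤ ‖P f‖ + ‖P (M (f - P f))‖ := norm_sub_le _ _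
      _ ≤ ‖f‖ + ‖M‖ * ‖f‖ := add_le_add hPf hPMle
      _ = (1 + ‖M‖) * ‖f‖ := by ring
  have hPw : c * ‖P w‖ ≤ (1 + ‖M‖) * ‖f‖ := le_trans (hAnorm (P w)) hAle
  have hPwle : ‖P w‖ ≤ (1 + ‖M‖) / c * ‖f‖ := by
    rw [div_mul_eq_mul_div, le_div_iff₀ hc, mul_comm ‖P w‖ c]
    exact hPw
  calc ‖w‖ = ‖P w + (w - P w)‖ := by congr 1; abel
    _ ≤ ‖P w‖ + ‖w - P w‖ := norm_add_le _ _
    _ ≤ (1 + ‖M‖) / c * ‖f‖ + ‖f‖ := by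
        apply add_le_add hPwle
        rw [hwP]; exact hQf
    _ = (1 + (1 + ‖M‖) / c) * ‖f‖ := by ring
end
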